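/- arXiv:1110.0160 — 4 statements merged into one kernel-verified Lean document; each statement's English description precedes it below -/
import Mathlib

section
/- Fix an integer ℓ > 0. There exists a constant c > 0 depending only on ℓ such that the following holds for every n: if a Young diagram λ is a subset of the staircase Young diagram of size n, and x = (i,j) is a corner of λ with i ≥ n/4, j ≥ n/4 and n − i − j ≤ ℓ, then for a uniformly random standard Young tableau T of shape λ, the probability that T(x) = |λ| is at least c/n. -/
noncomputable section

/-- A finite set of boxes in `ℕ × ℕ` (with coordinates `≥ 1`) forms a Young diagram:
it is of the form `{(i,j) : 1 ≤ j ≤ λ_i}` for a nonincreasing sequence `λ_1 ≥ λ_2 ≥ ⋯`,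
equivalently it is downward closed in both coordinates. -/
def IsDiagram (D : Finset (ℕ × ℕ)) : Prop :=
  ∀ c ∈ D, 1 ≤ c.1 ∧ 1 ≤ c.2 ∧
    ∀ i j : ℕ, 1 ≤ i → i ≤ c.1 → 1 ≤ j → j ≤ c.2 → (i, j) ∈ D

/-- A standard Young tableau of shape `D`: a bijection from the boxes of `D` onto
`{1, …, |D|}`, increasing along rows and columns (normalized to vanish off `D`). -/
def IsSYT (D : Finset (ℕ × ℕ)) (T : ℕ × ℕ → ℕ) : Prop :=
  Set.BijOn T ↑D ↑(Finset.Icc 1 D.card) ∧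
  (∀ x, x ∉ D → T x = 0) ∧
  (∀ i j : ℕ, (i, j) ∈ D → (i, j + 1) ∈ D → T (i, j) < T (i, j + 1)) ∧
  (∀ i j : ℕ, (i, j) ∈ D → (i + 1, j) ∈ D → T (i, j) < T (i + 1, j))

/-- `dim D` is the number of standard Young tableaux of shape `D`. -/
def dimYD (D : Finset (ℕ × ℕ)) : ℕ := Nat.card {T : ℕ × ℕ → ℕ // IsSYT D T}

/-- The hook length of a box `x` in `D`: the number of boxes in the hook of `x`
(`x` itself, its arm and its leg). -/
def hookLength (D : Finset (ℕ × ℕ)) (x : ℕ × ℕ) : ℕ :=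
  (D.filter fun c => (c.1 = x.1 ∧ x.2 ≤ c.2) ∨ (c.2 = x.2 ∧ x.1 ≤ c.1)).card

/-- The co-hook of a box `x` in `D`: the union of its co-arm and co-leg. -/
def coHook (D : Finset (ℕ × ℕ)) (x : ℕ × ℕ) : Finset (ℕ × ℕ) :=
  D.filter fun c => (c.1 = x.1 ∧ c.2 < x.2) ∨ (c.2 = x.2 ∧ c.1 < x.1)

/-- A corner of `D` is a box with hook length `1`. -/
def IsCornerBox (D : Finset (ℕ × ℕ)) (x : ℕ × ℕ) : Prop := x ∈ D ∧ hookLength D x = 1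

/-- The boxes of the staircase Young diagram of size `n`, with row lengths
`(n-1, n-2, …, 1)`. -/
def staircase (n : ℕ) : Finset (ℕ × ℕ) :=
  (Finset.Icc 1 n ×ˢ Finset.Icc 1 n).filter fun c => c.1 + c.2 ≤ n

/-!
Removing the entry `|λ|` from the tableaux whose largest entry sits at the corner `x` is a
bijection onto the tableaux of `λ ∖ {x}`, so the probability is `dim (λ ∖ {x}) / dim λ`. By the
hook length formula this ratio is `∏_{y ∈ coHook x} (1 + 1 / (h y - 1)) / |λ|`. The formula follows
by induction on `|λ|` from the Greene–Nijenhuis–Wilf identity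
`∑ₓ ∏_{y ∈ coHook x} (1 + 1 / (h y - 1)) = |λ|` over the corners `x`, which is obtained by summing
the hitting probabilities of their hook walk over all starting cells and all corners.

Inside the staircase, a corner `x = (a, b)` with `L = n - a - b` has `h (i, b) - 1 ≤ L + 2 (a - i)`
along its co-leg, so the square of the co-leg product is at least `(2a + L) / (L + 2)`, and
likewise for the co-arm. For `a, b ≥ n / 4` and `L ≤ ℓ` the co-hook product is therefore at least
`n / (2 (ℓ + 2))`, while `|λ| ≤ n²`.
-/

open Finset Function

def rowLen (D : Finset (ℕ × ℕ)) (r : ℕ) : ℕ := (D.filter (·.1 = r)).sup Prod.snd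

def colLen (D : Finset (ℕ × ℕ)) (c : ℕ) : ℕ := (D.filter (·.2 = c)).sup Prod.fst

def armLeg (D : Finset (ℕ × ℕ)) (p : ℕ × ℕ) : ℕ := rowLen D p.1 - p.2 + (colLen D p.2 - p.1)

def corners (D : Finset (ℕ × ℕ)) : Finset (ℕ × ℕ) := D.filter (hookLength D · = 1)

def coHookProduct (D : Finset (ℕ × ℕ)) (x : ℕ × ℕ) : ℝ :=
  ∏ y ∈ coHook D x, (1 + (armLeg D y : ℝ)⁻¹)

section

variable {D : Finset (ℕ × ℕ)} {r c : ℕ}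

lemma le_rowLen_of_mem (h : (r, c) ∈ D) : c ≤ rowLen D r :=
  le_sup (f := Prod.snd) (mem_filter.2 ⟨h, rfl⟩ : (r, c) ∈ D.filter (·.1 = r))

lemma le_colLen_of_mem (h : (r, c) ∈ D) : r ≤ colLen D c :=
  le_sup (f := Prod.fst) (mem_filter.2 ⟨h, rfl⟩ : (r, c) ∈ D.filter (·.2 = c))

lemma mem_corners {x : ℕ × ℕ} : x ∈ corners D ↔ IsCornerBox D x := by
  simp [corners, IsCornerBox]

end

namespace IsDiagram

variable {D : Finset (ℕ × ℕ)} (hD : IsDiagram D)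
include hD

lemma mem_iff_le_rowLen {r c : ℕ} : (r, c) ∈ D ↔ 1 ≤ c ∧ c ≤ rowLen D r := by
  refine ⟨fun h => ⟨(hD _ h).2.1, le_rowLen_of_mem h⟩, fun ⟨hc, hcr⟩ => ?_⟩
  obtain ⟨q, hq, hcq⟩ := (Finset.le_sup_iff hc).1 hcr
  obtain ⟨hqD, rfl⟩ := mem_filter.1 hq
  exact (hD q hqD).2.2 q.1 c (hD q hqD).1 le_rfl hc hcq

lemma mem_iff_le_colLen {r c : ℕ} : (r, c) ∈ D ↔ 1 ≤ r ∧ r ≤ colLen D c := by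
  refine ⟨fun h => ⟨(hD _ h).1, le_colLen_of_mem h⟩, fun ⟨hr, hrc⟩ => ?_⟩
  obtain ⟨q, hq, hrq⟩ := (Finset.le_sup_iff hr).1 hrc
  obtain ⟨hqD, rfl⟩ := mem_filter.1 hq
  exact (hD q hqD).2.2 r q.2 hr hrq (hD q hqD).2.1 le_rfl

lemma hookLength_eq {p : ℕ × ℕ} (hp : p ∈ D) : hookLength D p = armLeg D p + 1 := by
  obtain ⟨r, c⟩ := p
  have hc := le_rowLen_of_mem hp
  have hr := le_colLen_of_mem hp
  have hhook : D.filter (fun q => (q.1 = r ∧ c ≤ q.2) ∨ (q.2 = c ∧ r ≤ q.1)) =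
      insert (r, c) ((Ioc c (rowLen D r)).image (r, ·) ∪ (Ioc r (colLen D c)).image (·, c)) := by
    ext ⟨i, j⟩
    simp only [mem_filter, mem_insert, mem_union, mem_image, mem_Ioc, Prod.mk.injEq]
    constructor
    · rintro ⟨hij, ⟨rfl, hj⟩ | ⟨rfl, hi⟩⟩
      · rcases hj.eq_or_lt with rfl | hj
        · exact Or.inl ⟨rfl, rfl⟩
        · exact Or.inr (Or.inl ⟨j, ⟨hj, le_rowLen_of_mem hij⟩, rfl, rfl⟩)
      · rcases hi.eq_or_lt with rfl | hi
        · exact Or.inl ⟨rfl, rfl⟩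
        · exact Or.inr (Or.inr ⟨i, ⟨hi, le_colLen_of_mem hij⟩, rfl, rfl⟩)
    · rintro (⟨rfl, rfl⟩ | ⟨j, ⟨hj, hjr⟩, rfl, rfl⟩ | ⟨i, ⟨hi, hic⟩, rfl, rfl⟩)
      · exact ⟨hp, Or.inl ⟨rfl, le_rfl⟩⟩
      · exact ⟨(hD.mem_iff_le_rowLen).2 ⟨by omega, hjr⟩, Or.inl ⟨rfl, hj.le⟩⟩
      · exact ⟨(hD.mem_iff_le_colLen).2 ⟨by omega, hic⟩, Or.inr ⟨rfl, hi.le⟩⟩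
  rw [hookLength, hhook, card_insert_of_notMem, card_union_of_disjoint,
    card_image_of_injective _ (Prod.mk_right_injective r),
    card_image_of_injective _ (Prod.mk_left_injective c), Nat.card_Ioc, Nat.card_Ioc, armLeg]
  · simp only [disjoint_left, mem_image, mem_Ioc, not_exists, not_and]
    rintro _ ⟨j, hj, rfl⟩ i hi h
    simp only [Prod.mk.injEq] at h
    omega
  · simp

lemma isCornerBox_iff_armLeg_eq_zero {p : ℕ × ℕ} (hp : p ∈ D) :
    IsCornerBox D p ↔ armLeg D p = 0 := by
  simp [IsCornerBox, hp, hD.hookLength_eq hp]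

lemma isCornerBox_iff {x : ℕ × ℕ} :
    IsCornerBox D x ↔ x ∈ D ∧ rowLen D x.1 = x.2 ∧ colLen D x.2 = x.1 := by
  refine ⟨fun hx => ⟨hx.1, ?_⟩, fun ⟨hx, hrow, hcol⟩ => ?_⟩
  · have := (hD.isCornerBox_iff_armLeg_eq_zero hx.1).1 hx
    have := le_rowLen_of_mem hx.1
    have := le_colLen_of_mem hx.1
    simp only [armLeg] at *
    omega
  · simp [hD.isCornerBox_iff_armLeg_eq_zero hx, armLeg, hrow, hcol]

end IsDiagram

namespace IsCornerBox

variable {D : Finset (ℕ × ℕ)} {x : ℕ × ℕ} (hx : IsCornerBox D x) (hD : IsDiagram D)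
include hx hD

lemma rowLen_eq : rowLen D x.1 = x.2 := ((hD.isCornerBox_iff).1 hx).2.1

lemma colLen_eq : colLen D x.2 = x.1 := ((hD.isCornerBox_iff).1 hx).2.2

lemma armLeg_self : armLeg D x = 0 := (hD.isCornerBox_iff_armLeg_eq_zero hx.1).1 hx

lemma snd_le_rowLen {r : ℕ} (hr : 1 ≤ r) (hrx : r ≤ x.1) : x.2 ≤ rowLen D r :=
  le_rowLen_of_mem ((hD x hx.1).2.2 r x.2 hr hrx (hD x hx.1).2.1 le_rfl)

lemma fst_le_colLen {c : ℕ} (hc : 1 ≤ c) (hcx : c ≤ x.2) : x.1 ≤ colLen D c :=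
  le_colLen_of_mem ((hD x hx.1).2.2 x.1 c (hD x hx.1).1 le_rfl hc hcx)

lemma armLeg_fst_pos {i : ℕ} (hi : i < x.1) : 0 < armLeg D (i, x.2) := by
  have := hx.colLen_eq hD
  simp only [armLeg]
  omega

lemma armLeg_snd_pos {j : ℕ} (hj : j < x.2) : 0 < armLeg D (x.1, j) := by
  have := hx.rowLen_eq hD
  simp only [armLeg]
  omega

lemma armLeg_pos_of_mem_coHook {y : ℕ × ℕ} (hy : y ∈ coHook D x) : 0 < armLeg D y := by
  obtain ⟨-, ⟨h₁, h₂⟩ | ⟨h₂, h₁⟩⟩ := mem_filter.1 hy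
  · have := hx.armLeg_snd_pos hD h₂
    rwa [← h₁] at this
  · have := hx.armLeg_fst_pos hD h₁
    rwa [← h₂] at this

lemma armLeg_eq_add {p : ℕ × ℕ} (hp : p ∈ D) (hpx : p ≤ x) :
    armLeg D p = armLeg D (p.1, x.2) + armLeg D (x.1, p.2) := by
  have := hx.snd_le_rowLen hD (hD p hp).1 hpx.1
  have := hx.fst_le_colLen hD (hD p hp).2.1 hpx.2
  have := hx.rowLen_eq hD
  have := hx.colLen_eq hD
  obtain ⟨_, _⟩ := hpx
  simp only [armLeg]
  omega

lemma eq_of_le {q : ℕ × ℕ} (hq : q ∈ D) (hxq : x ≤ q) : q = x := by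
  have hrow := le_rowLen_of_mem ((hD q hq).2.2 x.1 q.2 (hD x hx.1).1 hxq.1 (hD q hq).2.1 le_rfl)
  have hcol := le_colLen_of_mem ((hD q hq).2.2 q.1 x.2 (hD q hq).1 le_rfl (hD x hx.1).2.1 hxq.2)
  rw [hx.rowLen_eq hD] at hrow
  rw [hx.colLen_eq hD] at hcol
  exact Prod.ext (hcol.antisymm hxq.1) (hrow.antisymm hxq.2)

lemma isDiagram_erase : IsDiagram (D.erase x) := by
  intro q hq
  obtain ⟨hqx, hqD⟩ := mem_erase.1 hq
  refine ⟨(hD q hqD).1, (hD q hqD).2.1, fun i j hi hiq hj hjq => mem_erase.2 ⟨?_, ?_⟩⟩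
  · rintro rfl
    exact hqx (hx.eq_of_le hD hqD ⟨hiq, hjq⟩)
  · exact (hD q hqD).2.2 i j hi hiq hj hjq

lemma coHookProduct_eq : coHookProduct D x =
    (∏ i ∈ Ioo 0 x.1, (1 + (armLeg D (i, x.2) : ℝ)⁻¹)) *
      ∏ j ∈ Ioo 0 x.2, (1 + (armLeg D (x.1, j) : ℝ)⁻¹) := by
  have hcoHook : coHook D x = (Ioo 0 x.1).image (·, x.2) ∪ (Ioo 0 x.2).image (x.1, ·) := by
    ext ⟨i, j⟩
    simp only [coHook, mem_filter, mem_union, mem_image, mem_Ioo, Prod.mk.injEq]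
    constructor
    · rintro ⟨hq, ⟨rfl, hj⟩ | ⟨rfl, hi⟩⟩
      · exact Or.inr ⟨j, ⟨(hD _ hq).2.1, hj⟩, rfl, rfl⟩
      · exact Or.inl ⟨i, ⟨(hD _ hq).1, hi⟩, rfl, rfl⟩
    · rintro (⟨i, ⟨hi, hix⟩, rfl, rfl⟩ | ⟨j, ⟨hj, hjx⟩, rfl, rfl⟩)
      · exact ⟨(hD x hx.1).2.2 i x.2 hi hix.le (hD x hx.1).2.1 le_rfl, Or.inr ⟨rfl, hix⟩⟩
      · exact ⟨(hD x hx.1).2.2 x.1 j (hD x hx.1).1 le_rfl hj hjx.le, Or.inl ⟨rfl, hjx⟩⟩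
  rw [coHookProduct, hcoHook, prod_union, prod_image fun _ _ _ _ h => Prod.mk_left_injective _ h,
    prod_image fun _ _ _ _ h => Prod.mk_right_injective _ h]
  simp only [disjoint_left, mem_image, mem_Ioo, not_exists, not_and]
  rintro _ ⟨i, ⟨-, hi⟩, rfl⟩ j - h
  exact hi.ne (congrArg Prod.fst h).symm

end IsCornerBox

/-! ### The hook walk -/

def tailWeight (g : ℕ → ℝ) (b c : ℕ) : ℝ :=
  if c < b then (g c)⁻¹ * ∏ j ∈ Ioo c b, (1 + (g j)⁻¹) else if c = b then 1 else 0

section tailWeight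

variable (g : ℕ → ℝ) {b c : ℕ}

lemma tailWeight_self : tailWeight g b b = 1 := by
  simp [tailWeight]

lemma tailWeight_of_lt (h : b < c) : tailWeight g b c = 0 := by
  simp [tailWeight, h.not_gt, h.ne']

lemma sum_Ioc_tailWeight_of_lt (h : c < b) :
    ∑ j ∈ Ioc c b, tailWeight g b j = ∏ j ∈ Ioo c b, (1 + (g j)⁻¹) := by
  obtain ⟨k, rfl⟩ := Nat.exists_eq_add_of_lt h
  induction k generalizing c with
  | zero => simp [tailWeight_self, ← Ico_add_one_left_eq_Ioo]
  | succ k ih =>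
    rw [show c + (k + 1) + 1 = c + 1 + k + 1 by ring, ← insert_Ioc_add_one_left_eq_Ioc (by omega),
      ← Ico_add_one_left_eq_Ioo, ← Ioo_insert_left (by omega), sum_insert (by simp),
      prod_insert (by simp), ih (by omega), tailWeight, if_pos (by omega)]
    ring

lemma sum_Ioc_tailWeight {m : ℕ} (hg : ∀ j < b, g j ≠ 0) (hgb : g b = 0) (hbm : b ≤ m) :
    ∑ j ∈ Ioc c m, tailWeight g b j = g c * tailWeight g b c := by
  rcases lt_or_ge c b with hcb | hbc
  · rw [← sum_Ioc_consecutive _ hcb.le hbm, sum_Ioc_tailWeight_of_lt g hcb,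
      sum_eq_zero fun j hj => tailWeight_of_lt g (mem_Ioc.1 hj).1, tailWeight, if_pos hcb,
      add_zero, mul_inv_cancel_left₀ (hg c hcb)]
  · rw [sum_eq_zero fun j hj => tailWeight_of_lt g (hbc.trans_lt (mem_Ioc.1 hj).1)]
    rcases hbc.eq_or_lt with rfl | hbc
    · rw [hgb, zero_mul]
    · rw [tailWeight_of_lt g hbc, mul_zero]

end tailWeight

/-- The probability that the hook walk of Greene, Nijenhuis and Wilf started at `p` ends at the
corner `x`. -/
def cornerWeight (D : Finset (ℕ × ℕ)) (x p : ℕ × ℕ) : ℝ :=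
  tailWeight (fun i => armLeg D (i, x.2)) x.1 p.1 * tailWeight (fun j => armLeg D (x.1, j)) x.2 p.2

section cornerWeight

variable {D : Finset (ℕ × ℕ)} {x p : ℕ × ℕ}

lemma cornerWeight_self : cornerWeight D x x = 1 := by
  simp [cornerWeight, tailWeight_self]

lemma cornerWeight_of_not_le (h : ¬p ≤ x) : cornerWeight D x p = 0 := by
  rw [Prod.le_def, not_and_or, not_le, not_le] at h
  rcases h with h | h <;> simp [cornerWeight, tailWeight_of_lt _ h]

end cornerWeight

namespace IsCornerBox

variable {D : Finset (ℕ × ℕ)} {x : ℕ × ℕ} (hx : IsCornerBox D x) (hD : IsDiagram D)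
include hx hD

lemma armLeg_mul_cornerWeight {p : ℕ × ℕ} (hp : p ∈ D) :
    armLeg D p * cornerWeight D x p =
      ∑ i ∈ Ioc p.1 (colLen D p.2), cornerWeight D x (i, p.2) +
        ∑ j ∈ Ioc p.2 (rowLen D p.1), cornerWeight D x (p.1, j) := by
  by_cases hpx : p ≤ x
  · have hleg := sum_Ioc_tailWeight (fun i => (armLeg D (i, x.2) : ℝ)) (c := p.1)
      (fun i hi => by exact_mod_cast (hx.armLeg_fst_pos hD hi).ne') (by simp [hx.armLeg_self hD])
      (hx.fst_le_colLen hD (hD p hp).2.1 hpx.2)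
    have harm := sum_Ioc_tailWeight (fun j => (armLeg D (x.1, j) : ℝ)) (c := p.2)
      (fun j hj => by exact_mod_cast (hx.armLeg_snd_pos hD hj).ne') (by simp [hx.armLeg_self hD])
      (hx.snd_le_rowLen hD (hD p hp).1 hpx.1)
    simp only [cornerWeight, ← sum_mul, ← mul_sum, hleg, harm, hx.armLeg_eq_add hD hp hpx]
    push_cast
    ring
  · have hvanish {q : ℕ × ℕ} (hq : p ≤ q) : cornerWeight D x q = 0 :=
      cornerWeight_of_not_le fun h => hpx (hq.trans h)
    rw [hvanish le_rfl, mul_zero,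
      sum_eq_zero fun i hi => hvanish (q := (i, p.2)) ⟨(mem_Ioc.1 hi).1.le, le_rfl⟩,
      sum_eq_zero fun j hj => hvanish (q := (p.1, j)) ⟨le_rfl, (mem_Ioc.1 hj).1.le⟩, add_zero]

lemma sum_cornerWeight : ∑ p ∈ D, cornerWeight D x p = coHookProduct D x := by
  have hrect : Ioc 0 x.1 ×ˢ Ioc 0 x.2 ⊆ D := fun p hp => by
    simp only [mem_product, mem_Ioc] at hp
    exact (hD x hx.1).2.2 p.1 p.2 hp.1.1 hp.1.2 hp.2.1 hp.2.2
  have hvanish : ∀ p ∈ D, p ∉ Ioc 0 x.1 ×ˢ Ioc 0 x.2 → cornerWeight D x p = 0 :=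
    fun p hp hpr => cornerWeight_of_not_le fun hpx => hpr (by
      simp only [mem_product, mem_Ioc]
      exact ⟨⟨(hD p hp).1, hpx.1⟩, ⟨(hD p hp).2.1, hpx.2⟩⟩)
  rw [← sum_subset hrect hvanish, sum_product]
  simp only [cornerWeight]
  rw [← sum_mul_sum, sum_Ioc_tailWeight_of_lt _ (hD x hx.1).1,
    sum_Ioc_tailWeight_of_lt _ (hD x hx.1).2.1, hx.coHookProduct_eq hD]

end IsCornerBox

namespace IsDiagram

variable {D : Finset (ℕ × ℕ)} (hD : IsDiagram D)
include hD

lemma sum_corners_cornerWeight {p : ℕ × ℕ} (hp : p ∈ D) :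
    ∑ x ∈ corners D, cornerWeight D x p = 1 := by
  -- every step of the hook walk increases `q.1 + q.2`
  generalize hk : D.sup (fun q => q.1 + q.2) - (p.1 + p.2) = k
  induction k using Nat.strong_induction_on generalizing p with
  | _ k ih =>
  have ih' {q : ℕ × ℕ} (hq : q ∈ D) (hpq : p.1 + p.2 < q.1 + q.2) :
      ∑ x ∈ corners D, cornerWeight D x q = 1 := by
    have := le_sup (f := fun q : ℕ × ℕ => q.1 + q.2) hq
    exact ih _ (by omega) hq rfl
  by_cases hpc : IsCornerBox D p
  · rw [sum_eq_single_of_mem p (mem_corners.2 hpc), cornerWeight_self]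
    exact fun x hx hxp => cornerWeight_of_not_le fun h =>
      hxp (hpc.eq_of_le hD (mem_corners.1 hx).1 h)
  have hp₀ : (armLeg D p : ℝ) ≠ 0 := by
    exact_mod_cast mt (hD.isCornerBox_iff_armLeg_eq_zero hp).2 hpc
  have hleg : ∑ i ∈ Ioc p.1 (colLen D p.2), ∑ x ∈ corners D, cornerWeight D x (i, p.2) =
      (colLen D p.2 - p.1 : ℕ) := by
    rw [sum_congr rfl fun i hi => ih' ((hD.mem_iff_le_colLen).2 ⟨?_, (mem_Ioc.1 hi).2⟩) ?_]
    · simp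
    · exact le_trans (hD p hp).1 (mem_Ioc.1 hi).1.le
    · exact Nat.add_lt_add_right (mem_Ioc.1 hi).1 _
  have harm : ∑ j ∈ Ioc p.2 (rowLen D p.1), ∑ x ∈ corners D, cornerWeight D x (p.1, j) =
      (rowLen D p.1 - p.2 : ℕ) := by
    rw [sum_congr rfl fun j hj => ih' ((hD.mem_iff_le_rowLen).2 ⟨?_, (mem_Ioc.1 hj).2⟩) ?_]
    · simp
    · exact le_trans (hD p hp).2.1 (mem_Ioc.1 hj).1.le
    · exact Nat.add_lt_add_left (mem_Ioc.1 hj).1 _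
  rw [sum_congr rfl fun x hx => (eq_inv_mul_iff_mul_eq₀ hp₀).2
      ((mem_corners.1 hx).armLeg_mul_cornerWeight hD hp),
    ← mul_sum, sum_add_distrib, sum_comm, hleg, sum_comm, harm, ← Nat.cast_add, add_comm]
  exact inv_mul_cancel₀ hp₀

theorem sum_coHookProduct_corners : ∑ x ∈ corners D, coHookProduct D x = #D := by
  rw [← sum_congr rfl fun x hx => (mem_corners.1 hx).sum_cornerWeight hD, sum_comm,
    sum_congr rfl fun p hp => hD.sum_corners_cornerWeight hp, sum_const, nsmul_one]

end IsDiagram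

/-! ### Standard Young tableaux -/

namespace IsSYT

variable {D : Finset (ℕ × ℕ)} {T : ℕ × ℕ → ℕ}

lemma mem_Icc (hT : IsSYT D T) {q : ℕ × ℕ} (hq : q ∈ D) : T q ∈ Icc 1 #D := by
  simpa using hT.1.mapsTo hq

lemma isCornerBox (hT : IsSYT D T) (hD : IsDiagram D) {x : ℕ × ℕ} (hx : x ∈ D)
    (hTx : T x = #D) : IsCornerBox D x := by
  obtain ⟨a, b⟩ := x
  have hrow := (hD.mem_iff_le_rowLen).1 hx
  have hcol := (hD.mem_iff_le_colLen).1 hx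
  refine (hD.isCornerBox_iff).2 ⟨hx, le_antisymm (not_lt.1 fun h => ?_) hrow.2,
    le_antisymm (not_lt.1 fun h => ?_) hcol.2⟩
  · have hnext : (a, b + 1) ∈ D := (hD.mem_iff_le_rowLen).2 ⟨by omega, h⟩
    have := (Finset.mem_Icc.1 (hT.mem_Icc hnext)).2
    have := hT.2.2.1 a b hx hnext
    omega
  · have hnext : (a + 1, b) ∈ D := (hD.mem_iff_le_colLen).2 ⟨by omega, h⟩
    have := (Finset.mem_Icc.1 (hT.mem_Icc hnext)).2
    have := hT.2.2.2 a b hx hnext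
    omega

end IsSYT

lemma bijOn_iff_bijOn_erase {D : Finset (ℕ × ℕ)} {T : ℕ × ℕ → ℕ} {x : ℕ × ℕ} (hx : x ∈ D)
    (hTx : T x = #D) :
    Set.BijOn T D (Icc 1 #D) ↔ Set.BijOn (update T x 0) (D.erase x) (Icc 1 #(D.erase x)) := by
  have hEq : Set.EqOn (update T x 0) T (D.erase x) := fun y hy =>
    update_of_ne (mem_erase.1 hy).1 _ _
  have hIcc : insert #D (Icc 1 (#D - 1)) = Icc 1 #D := by
    have := card_pos.2 ⟨x, hx⟩
    ext
    simp only [mem_insert, mem_Icc]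
    omega
  rw [hEq.bijOn_iff, card_erase_of_mem hx, ← Set.BijOn.insert_iff (f := T) (a := x)
    (s := ↑(D.erase x)) (t := ↑(Icc 1 (#D - 1))) (by simp) (by simp [hTx]), ← coe_insert,
    ← coe_insert, insert_erase hx, hTx, hIcc]

namespace IsCornerBox

variable {D : Finset (ℕ × ℕ)} {T : ℕ × ℕ → ℕ} {x : ℕ × ℕ} (hx : IsCornerBox D x)
  (hTx : T x = #D)
include hx hTx

lemma isSYT_erase (hT : IsSYT D T) : IsSYT (D.erase x) (update T x 0) := by
  have hupd : ∀ y ∈ D.erase x, update T x 0 y = T y := fun y hy =>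
    update_of_ne (mem_erase.1 hy).1 _ _
  obtain ⟨hbij, hzero, hrow, hcol⟩ := hT
  refine ⟨(bijOn_iff_bijOn_erase hx.1 hTx).1 hbij, fun y hy => ?_, fun i j h₁ h₂ => ?_,
    fun i j h₁ h₂ => ?_⟩
  · by_cases hyx : y = x
    · simp [hyx]
    · rw [update_of_ne hyx]
      exact hzero y fun h => hy (mem_erase.2 ⟨hyx, h⟩)
  · rw [hupd _ h₁, hupd _ h₂]
    exact hrow i j (mem_of_mem_erase h₁) (mem_of_mem_erase h₂)
  · rw [hupd _ h₁, hupd _ h₂]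
    exact hcol i j (mem_of_mem_erase h₁) (mem_of_mem_erase h₂)

lemma isSYT_of_isSYT_erase (hD : IsDiagram D) (hT : IsSYT (D.erase x) (update T x 0)) :
    IsSYT D T := by
  have hupd : ∀ y ∈ D.erase x, update T x 0 y = T y := fun y hy =>
    update_of_ne (mem_erase.1 hy).1 _ _
  obtain ⟨hbij, hzero, hrow, hcol⟩ := hT
  have hbound : ∀ y ∈ D.erase x, T y < #D := fun y hy => by
    have := mem_Icc.1 (mem_coe.1 (hbij.mapsTo (mem_coe.2 hy)))
    rw [hupd y hy, card_erase_of_mem hx.1] at this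
    omega
  have hlt {p q : ℕ × ℕ} (hp : p ∈ D) (hq : q ∈ D) (hpq : p < q)
      (h : p ∈ D.erase x → q ∈ D.erase x → update T x 0 p < update T x 0 q) : T p < T q := by
    have hpx : p ≠ x := by
      rintro rfl
      exact hpq.ne (hx.eq_of_le hD hq hpq.le).symm
    have hp' : p ∈ D.erase x := mem_erase.2 ⟨hpx, hp⟩
    by_cases hqx : q = x
    · rw [hqx, hTx]
      exact hbound p hp'
    · have hq' : q ∈ D.erase x := mem_erase.2 ⟨hqx, hq⟩
      simpa only [hupd _ hp', hupd _ hq'] using h hp' hq'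
  refine ⟨(bijOn_iff_bijOn_erase hx.1 hTx).2 hbij, fun y hy => ?_,
    fun i j h₁ h₂ => hlt h₁ h₂ (Prod.mk_lt_mk_iff_right.2 j.lt_succ_self) (hrow i j),
    fun i j h₁ h₂ => hlt h₁ h₂ (Prod.mk_lt_mk_iff_left.2 i.lt_succ_self) (hcol i j)⟩
  have hyx : y ≠ x := fun h => hy (h ▸ hx.1)
  rw [← update_of_ne hyx (0 : ℕ) T]
  exact hzero y fun h => hy (mem_of_mem_erase h)

end IsCornerBox

lemma IsCornerBox.card_isSYT_apply_eq_dimYD_erase {D : Finset (ℕ × ℕ)} {x : ℕ × ℕ}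
    (hx : IsCornerBox D x) (hD : IsDiagram D) :
    Nat.card {T : ℕ × ℕ → ℕ // IsSYT D T ∧ T x = #D} = dimYD (D.erase x) :=
  Nat.card_congr
    { toFun := fun T => ⟨update T.1 x 0, hx.isSYT_erase T.2.2 T.2.1⟩
      invFun := fun T => ⟨update T.1 x #D, hx.isSYT_of_isSYT_erase (update_self ..) hD (by
        rw [update_idem, update_eq_self_iff.2 (T.2.2.1 x (notMem_erase x D)).symm]
        exact T.2), update_self ..⟩
      left_inv := fun T => Subtype.ext (by simp [update_idem, ← T.2.2])
      right_inv := fun T => Subtype.ext (by simp [update_idem, T.2.2.1 x (notMem_erase x D)]) }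

lemma finite_setOf_isSYT (D : Finset (ℕ × ℕ)) : {T | IsSYT D T}.Finite := by
  refine Set.Finite.of_finite_image (f := fun T (p : D) => T p) ?_ fun T₁ h₁ T₂ h₂ h => ?_
  · refine (Set.Finite.pi fun _ => Set.finite_Iic #D).subset ?_
    rintro _ ⟨T, hT, rfl⟩ p -
    exact (Finset.mem_Icc.1 (IsSYT.mem_Icc hT p.2)).2
  · funext y
    by_cases hy : y ∈ D
    · exact congrFun h ⟨y, hy⟩
    · rw [h₁.2.1 y hy, h₂.2.1 y hy]

lemma dimYD_empty : dimYD ∅ = 1 := by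
  refine Nat.card_eq_one_iff_exists.2 ⟨⟨0, ?_⟩, fun T => Subtype.ext (funext fun y => T.2.2.1 y
    (notMem_empty y))⟩
  exact ⟨by simp [Set.BijOn], fun _ _ => rfl, by simp, by simp⟩

lemma IsDiagram.dimYD_eq_sum_corners {D : Finset (ℕ × ℕ)} (hD : IsDiagram D) (hne : D.Nonempty) :
    dimYD D = ∑ x ∈ corners D, dimYD (D.erase x) := by
  have hcover : {T | IsSYT D T} = ⋃ x ∈ (corners D : Set (ℕ × ℕ)), {T | IsSYT D T ∧ T x = #D} := by
    ext T
    simp only [Set.mem_ofPred_eq, Set.mem_iUnion, exists_prop, mem_coe]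
    refine ⟨fun hT => ?_, fun ⟨_, _, hT, _⟩ => hT⟩
    obtain ⟨x, hx, hTx⟩ := hT.1.surjOn (by simpa using card_pos.2 hne : #D ∈ (Icc 1 #D : Set ℕ))
    exact ⟨x, mem_corners.2 (hT.isCornerBox hD hx hTx), hT, hTx⟩
  have hdisj : (corners D : Set (ℕ × ℕ)).PairwiseDisjoint fun x => {T | IsSYT D T ∧ T x = #D} :=
    fun x hx y hy hxy => Set.disjoint_left.2 fun T ⟨hT, hTx⟩ ⟨_, hTy⟩ =>
      hxy (hT.1.injOn (mem_corners.1 hx).1 (mem_corners.1 hy).1 (hTx.trans hTy.symm))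
  change {T | IsSYT D T}.ncard = _
  rw [hcover, Set.Finite.ncard_biUnion (corners D).finite_toSet
    (fun _ _ => (finite_setOf_isSYT D).subset fun _ hT => hT.1) hdisj, finsum_mem_coe_finset]
  exact sum_congr rfl fun x hx => (mem_corners.1 hx).card_isSYT_apply_eq_dimYD_erase hD

/-! ### The hook length formula -/

lemma hookLength_erase_add {D : Finset (ℕ × ℕ)} {x y : ℕ × ℕ} (hx : x ∈ D) (hy : y ∈ D.erase x) :
    hookLength (D.erase x) y + (if y ∈ coHook D x then 1 else 0) = hookLength D y := by
  obtain ⟨hyx, hyD⟩ := mem_erase.1 hy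
  have hiff : x ∈ D.filter (fun c => (c.1 = y.1 ∧ y.2 ≤ c.2) ∨ (c.2 = y.2 ∧ y.1 ≤ c.1)) ↔
      y ∈ coHook D x := by
    have : y.1 ≠ x.1 ∨ y.2 ≠ x.2 := by
      contrapose! hyx
      exact Prod.ext hyx.1 hyx.2
    simp only [coHook, mem_filter, hx, hyD, true_and]
    omega
  rw [hookLength, hookLength, filter_erase]
  split_ifs with h
  · rw [card_erase_add_one (hiff.2 h)]
  · rw [erase_eq_of_notMem (mt hiff.1 h), add_zero]

namespace IsCornerBox

variable {D : Finset (ℕ × ℕ)} {x : ℕ × ℕ} (hx : IsCornerBox D x) (hD : IsDiagram D)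
include hx hD

lemma prod_hookLength_eq : ∏ y ∈ D, (hookLength D y : ℝ) =
    coHookProduct D x * ∏ y ∈ D.erase x, (hookLength (D.erase x) y : ℝ) := by
  have hsub : coHook D x ⊆ D.erase x := fun y hy => by
    obtain ⟨hyD, h⟩ := mem_filter.1 hy
    refine mem_erase.2 ⟨?_, hyD⟩
    rintro rfl
    omega
  have hfactor : ∀ y ∈ D.erase x, (hookLength D y : ℝ) =
      (if y ∈ coHook D x then 1 + (armLeg D y : ℝ)⁻¹ else 1) * hookLength (D.erase x) y := by
    intro y hy
    have h := hookLength_erase_add hx.1 hy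
    rw [hD.hookLength_eq (mem_of_mem_erase hy)] at h ⊢
    split_ifs at h ⊢ with hco
    · have hpos : (0 : ℝ) < armLeg D y := by exact_mod_cast hx.armLeg_pos_of_mem_coHook hD hco
      rw [(add_left_inj 1).1 h]
      field_simp
      push_cast
      ring
    · rw [← h, add_zero, one_mul]
  rw [← mul_prod_erase D _ hx.1, hx.2, Nat.cast_one, one_mul, prod_congr rfl hfactor,
    prod_mul_distrib, prod_ite_mem, inter_eq_right.2 hsub, coHookProduct]

end IsCornerBox

open Nat in
theorem IsDiagram.dimYD_mul_prod_hookLength {D : Finset (ℕ × ℕ)} (hD : IsDiagram D) :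
    (dimYD D : ℝ) * ∏ y ∈ D, (hookLength D y : ℝ) = (#D)! := by
  generalize hn : #D = n
  induction n generalizing D with
  | zero => simp [card_eq_zero.1 hn, dimYD_empty]
  | succ n ih =>
    have hterm : ∀ x ∈ corners D,
        (dimYD (D.erase x) : ℝ) * ∏ y ∈ D, (hookLength D y : ℝ) = n ! * coHookProduct D x := by
      intro x hx
      have hx := mem_corners.1 hx
      rw [hx.prod_hookLength_eq hD, mul_left_comm, mul_comm,
        ih (hx.isDiagram_erase hD) (by rw [card_erase_of_mem hx.1, hn, Nat.add_sub_cancel])]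
    rw [hD.dimYD_eq_sum_corners (card_pos.1 (by omega)), Nat.cast_sum, sum_mul, sum_congr rfl hterm,
      ← mul_sum, hD.sum_coHookProduct_corners, hn, factorial_succ]
    push_cast
    ring

lemma IsDiagram.prod_hookLength_pos {D : Finset (ℕ × ℕ)} (hD : IsDiagram D) :
    0 < ∏ y ∈ D, (hookLength D y : ℝ) :=
  prod_pos fun y hy => by
    rw [hD.hookLength_eq hy]
    positivity

lemma IsCornerBox.dimYD_erase_div_dimYD {D : Finset (ℕ × ℕ)} {x : ℕ × ℕ} (hx : IsCornerBox D x)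
    (hD : IsDiagram D) : (dimYD (D.erase x) : ℝ) / dimYD D = coHookProduct D x / #D := by
  have hD' := hx.isDiagram_erase hD
  have hN : #D = #(D.erase x) + 1 := (card_erase_add_one hx.1).symm
  have h := hD.dimYD_mul_prod_hookLength
  have h' := hD'.dimYD_mul_prod_hookLength
  have hdim : (dimYD D : ℝ) ≠ 0 := by
    rintro h0
    rw [h0, zero_mul] at h
    exact (Nat.factorial_pos _).ne' (by exact_mod_cast h.symm)
  rw [hx.prod_hookLength_eq hD, hN, Nat.factorial_succ, Nat.cast_mul, ← h'] at h
  rw [div_eq_div_iff hdim (by rw [hN]; positivity),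
    ← mul_right_cancel_iff_of_pos hD'.prod_hookLength_pos, hN]
  push_cast at h ⊢
  linear_combination -h

/-! ### Hooks inside the staircase -/

lemma add_two_mul_le_mul_prod_sq {L : ℝ} (hL : 0 ≤ L) {g : ℕ → ℝ} {a : ℕ}
    (hg : ∀ i ∈ Ioo 0 a, 0 < g i ∧ g i ≤ L + 2 * (a - i)) :
    L + 2 * a ≤ (L + 2) * (∏ i ∈ Ioo 0 a, (1 + (g i)⁻¹)) ^ 2 := by
  induction a generalizing L with
  | zero => simp
  | succ a ih =>
    rcases Nat.eq_zero_or_pos a with rfl | ha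
    · simp [← Ico_add_one_left_eq_Ioo]
    rw [← Ioc_sub_one_right_eq_Ioo, Nat.add_sub_cancel, ← Ioo_insert_right ha,
      prod_insert (by simp)]
    obtain ⟨hga, hga'⟩ := hg a (by simpa using ha)
    push_cast at hga' ⊢
    have IH := ih (L := L + 2) (by linarith) fun i hi => by
      have := hg i (mem_Ioo.2 ⟨(mem_Ioo.1 hi).1, by have := (mem_Ioo.1 hi).2; omega⟩)
      push_cast at this
      exact ⟨this.1, by linarith⟩
    have hu : 1 ≤ (L + 2) * (g a)⁻¹ := by
      rw [← div_eq_mul_inv, le_div_iff₀ hga]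
      linarith
    have hfactor : L + 4 ≤ (L + 2) * (1 + (g a)⁻¹) ^ 2 := by
      nlinarith [inv_pos.2 hga]
    calc L + 2 * (a + 1) ≤ (L + 2 + 2) * (∏ i ∈ Ioo 0 a, (1 + (g i)⁻¹)) ^ 2 := by linarith
      _ ≤ (L + 2) * (1 + (g a)⁻¹) ^ 2 * (∏ i ∈ Ioo 0 a, (1 + (g i)⁻¹)) ^ 2 := by
        gcongr
        linarith
      _ = _ := by ring

lemma mem_staircase {n : ℕ} {p : ℕ × ℕ} :
    p ∈ staircase n ↔ 1 ≤ p.1 ∧ 1 ≤ p.2 ∧ p.1 + p.2 ≤ n := by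
  simp only [staircase, mem_filter, mem_product, mem_Icc]
  omega

lemma card_staircase_le (n : ℕ) : #(staircase n) ≤ n ^ 2 :=
  (card_filter_le _ _).trans (by simp [sq])

namespace IsCornerBox

variable {D : Finset (ℕ × ℕ)} {x : ℕ × ℕ} {n : ℕ} (hx : IsCornerBox D x) (hD : IsDiagram D)
  (hsub : D ⊆ staircase n)
include hx hD hsub

lemma armLeg_fst_le {i : ℕ} (hi : 0 < i) (hix : i < x.1) :
    (armLeg D (i, x.2) : ℝ) ≤ n - x.1 - x.2 + 2 * (x.1 - i) := by
  have hrow := hx.snd_le_rowLen hD hi hix.le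
  have hend := mem_staircase.1
    (hsub ((hD.mem_iff_le_rowLen).2 ⟨(hD x hx.1).2.1.trans hrow, le_rfl⟩))
  have := hx.colLen_eq hD
  have := mem_staircase.1 (hsub hx.1)
  have h : armLeg D (i, x.2) + x.1 + x.2 + 2 * i ≤ n + 2 * x.1 := by
    simp only [armLeg] at hend ⊢
    omega
  have : ((armLeg D (i, x.2) + x.1 + x.2 + 2 * i : ℕ) : ℝ) ≤ (n + 2 * x.1 : ℕ) := by
    exact_mod_cast h
  push_cast at this
  linarith

lemma armLeg_snd_le {j : ℕ} (hj : 0 < j) (hjx : j < x.2) :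
    (armLeg D (x.1, j) : ℝ) ≤ n - x.1 - x.2 + 2 * (x.2 - j) := by
  have hcol := hx.fst_le_colLen hD hj hjx.le
  have hend := mem_staircase.1
    (hsub ((hD.mem_iff_le_colLen).2 ⟨(hD x hx.1).1.trans hcol, le_rfl⟩))
  have := hx.rowLen_eq hD
  have := mem_staircase.1 (hsub hx.1)
  have h : armLeg D (x.1, j) + x.1 + x.2 + 2 * j ≤ n + 2 * x.2 := by
    simp only [armLeg] at hend ⊢
    omega
  have : ((armLeg D (x.1, j) + x.1 + x.2 + 2 * j : ℕ) : ℝ) ≤ (n + 2 * x.2 : ℕ) := by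
    exact_mod_cast h
  push_cast at this
  linarith

lemma mul_le_sq_mul_coHookProduct :
    (2 * x.1 + ((n : ℝ) - x.1 - x.2)) * (2 * x.2 + ((n : ℝ) - x.1 - x.2)) ≤
      (((n : ℝ) - x.1 - x.2 + 2) * coHookProduct D x) ^ 2 := by
  have hL : (0 : ℝ) ≤ n - x.1 - x.2 := by
    have := (mem_staircase.1 (hsub hx.1)).2.2
    rw [sub_sub, sub_nonneg]
    exact_mod_cast this
  have hcol := add_two_mul_le_mul_prod_sq hL (g := fun i => armLeg D (i, x.2)) (a := x.1)
    fun i hi => ⟨by exact_mod_cast hx.armLeg_fst_pos hD (mem_Ioo.1 hi).2,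
      hx.armLeg_fst_le hD hsub (mem_Ioo.1 hi).1 (mem_Ioo.1 hi).2⟩
  have hrow := add_two_mul_le_mul_prod_sq hL (g := fun j => armLeg D (x.1, j)) (a := x.2)
    fun j hj => ⟨by exact_mod_cast hx.armLeg_snd_pos hD (mem_Ioo.1 hj).2,
      hx.armLeg_snd_le hD hsub (mem_Ioo.1 hj).1 (mem_Ioo.1 hj).2⟩
  rw [hx.coHookProduct_eq hD]
  calc _ = (((n : ℝ) - x.1 - x.2) + 2 * x.1) * (((n : ℝ) - x.1 - x.2) + 2 * x.2) := by ring
    _ ≤ _ := mul_le_mul hcol hrow (by positivity) (by positivity)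
    _ = _ := by ring

end IsCornerBox

theorem corner_box_likely_general (ℓ : ℕ) :
    ∃ c : ℝ, 0 < c ∧ ∀ (n : ℕ) (D : Finset (ℕ × ℕ)), IsDiagram D → D ⊆ staircase n →
      ∀ i j : ℕ, IsCornerBox D (i, j) →
        (n : ℝ) / 4 ≤ (i : ℝ) → (n : ℝ) / 4 ≤ (j : ℝ) → (n : ℝ) - i - j ≤ (ℓ : ℝ) →
        c / n ≤
          (Nat.card {T : ℕ × ℕ → ℕ // IsSYT D T ∧ T (i, j) = D.card} : ℝ) / (dimYD D : ℝ) := by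
  refine ⟨1 / (2 * (ℓ + 2)), by positivity, fun n D hD hsub i j hx hi hj hijℓ => ?_⟩
  rw [hx.card_isSYT_apply_eq_dimYD_erase hD, hx.dimYD_erase_div_dimYD hD]
  obtain ⟨hi₁, -, hijn⟩ := mem_staircase.1 (hsub hx.1)
  have hn : (0 : ℝ) < n := by exact_mod_cast (by omega : 0 < n)
  have hcard : (#D : ℝ) ≤ n ^ 2 := by exact_mod_cast (card_le_card hsub).trans (card_staircase_le n)
  have hD₀ : (0 : ℝ) < #D := by exact_mod_cast card_pos.2 ⟨_, hx.1⟩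
  have hL : (0 : ℝ) ≤ n - i - j := by
    rw [sub_sub, sub_nonneg]
    exact_mod_cast hijn
  have hP₀ : 0 ≤ coHookProduct D (i, j) := prod_nonneg fun _ _ => by positivity
  have hsq := hx.mul_le_sq_mul_coHookProduct hD hsub
  have hP : (n : ℝ) / 2 ≤ (n - i - j + 2) * coHookProduct D (i, j) := by
    refine (pow_le_pow_iff_left₀ (by positivity) (by positivity) two_ne_zero).1 (le_trans ?_ hsq)
    rw [sq]
    exact mul_le_mul (by linarith) (by linarith) (by positivity) (by linarith)
  have hP' : (n : ℝ) ≤ 2 * (ℓ + 2) * coHookProduct D (i, j) := by nlinarith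
  rw [div_le_div_iff₀ hn hD₀, div_mul_eq_mul_div, div_le_iff₀ (by positivity)]
  nlinarith

/-- **Lemma.** Fix `ℓ > 0`. There is `c > 0` depending only on `ℓ` such that for every `n`,
every Young diagram `D` contained in the staircase diagram of size `n`, and every corner
`x = (i,j)` of `D` with `i, j ≥ n/4` and `n - i - j ≤ ℓ`, a uniformly random standard Young
tableau of shape `D` has its largest entry at `x` with probability at least `c/n`. -/
theorem corner_box_likely (ℓ : ℕ) (hℓ : 0 < ℓ) :
    ∃ c : ℝ, 0 < c ∧ ∀ (n : ℕ) (D : Finset (ℕ × ℕ)), IsDiagram D → D ⊆ staircase n →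
      ∀ i j : ℕ, IsCornerBox D (i, j) →
        (n : ℝ) / 4 ≤ (i : ℝ) → (n : ℝ) / 4 ≤ (j : ℝ) → (n : ℝ) - i - j ≤ (ℓ : ℝ) →
        c / n ≤
          (Nat.card {T : ℕ × ℕ → ℕ // IsSYT D T ∧ T (i, j) = D.card} : ℝ) / (dimYD D : ℝ) :=
  corner_box_likely_general ℓ
end
end

section
/- Let X_1,…,X_N be random variables taking values in {1,…,m} ∪ {∞} such that almost surely each a ∈ {1,…,m} appears exactly r times in the sequence X_1,…,X_N. Let A_1,…,A_N be events, and define the filtration F_i = σ(X_1,…,X_i, A_1,…,A_{i−1}). Assume that for some p ∈ [0,1] and all i, P(A_i | F_i) ≥ p almost surely. For a ∈ {1,…,m} let G_a = ∩_{i=1}^N ({X_i ≠ a} ∪ A_i). Then the random variable Σ_{a=1}^m 1_{G_a} stochastically dominates the binomial random variable Bin(m, p^r); that is, for every t ∈ ℝ, P(Σ_{a=1}^m 1_{G_a} ≥ t) ≥ P(Bin(m, p^r) ≥ t). -/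
open MeasureTheory

noncomputable section

/-- The σ-algebra `σ(X_1, …, X_i)` generated by the random variables `X_1, …, X_i`
(taking values in the countable space `ℕ∞ = {1,…} ∪ {∞}`, endowed with the discrete
σ-algebra `⊤`). -/
def sigmaX {Ω : Type*} (X : ℕ → Ω → ℕ∞) (i : ℕ) : MeasurableSpace Ω :=
  ⨆ k ∈ Finset.Icc 1 i, MeasurableSpace.comap (X k) ⊤

/-- The σ-algebra `F_i = σ(X_1, …, X_i, A_1, …, A_{i-1})`. -/
def sigmaXA {Ω : Type*} (X : ℕ → Ω → ℕ∞) (A : ℕ → Set Ω) (i : ℕ) : MeasurableSpace Ω :=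
  sigmaX X i ⊔ ⨆ k ∈ Finset.Icc 1 (i - 1), MeasurableSpace.generateFrom {A k}

/-- `S_k(a) = #{i ≤ k : X_i = a}`. -/
def countX {Ω : Type*} (X : ℕ → Ω → ℕ∞) (k a : ℕ) (ω : Ω) : ℕ :=
  ((Finset.Icc 1 k).filter fun i => X i ω = (a : ℕ∞)).card

/-!
Reveal the indices one at a time. Call a label `a` a survivor at time `k` if every `i ≤ k`
with `X_i = a` has `A_i`, and let `V_k` (`potential`) be the probability that at least `t`
labels still survive at time `N` in the idealized model where the future events `A_i` are
independent and have probability exactly `p`: each current survivor `a` then survives with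
probability `p ^ (r - S_k(a))`, independently of the others. Then `V_{k+1}` equals an
`F_{k+1}`-measurable value `V⁺` (`potentialHit`) on `A_{k+1}` and a smaller one `V⁻`
(`potentialMiss`) off it, with
`V_k = p V⁺ + (1 - p) V⁻`; since `P(A_{k+1} | F_{k+1}) ≥ p`, the expectation of `V_k` is
nondecreasing in `k`. Finally `V_0` is the binomial tail and `V_N` is the indicator of the
event in question.
-/

section SuccessTail

variable {α : Type*} [DecidableEq α] (q : α → ℝ)

-- The probability that at least `t` of independent events of probabilities `q a`, `a ∈ F`,
-- occur.
def successTail (F : Finset α) (t : ℝ) : ℝ :=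
  ∑ S ∈ F.powerset, (∏ a ∈ S, q a) * (∏ a ∈ F \ S, (1 - q a)) * if t ≤ S.card then 1 else 0

variable {q}

theorem successTail_congr {q' : α → ℝ} {F : Finset α} (h : ∀ a ∈ F, q a = q' a) (t : ℝ) :
    successTail q F t = successTail q' F t := by
  refine Finset.sum_congr rfl fun S hS => ?_
  have hin : ∏ a ∈ S, q a = ∏ a ∈ S, q' a :=
    Finset.prod_congr rfl fun a ha => h a (Finset.mem_powerset.1 hS ha)
  have hout : ∏ a ∈ F \ S, (1 - q a) = ∏ a ∈ F \ S, (1 - q' a) :=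
    Finset.prod_congr rfl fun a ha => by rw [h a (Finset.mem_sdiff.1 ha).1]
  rw [hin, hout]

@[simp]
theorem successTail_empty (t : ℝ) : successTail q ∅ t = if t ≤ 0 then 1 else 0 := by
  simp [successTail]

theorem successTail_insert {F : Finset α} {b : α} (hb : b ∉ F) (t : ℝ) :
    successTail q (insert b F) t =
      q b * successTail q F (t - 1) + (1 - q b) * successTail q F t := by
  rw [successTail, Finset.sum_powerset_insert hb, successTail, successTail, Finset.mul_sum,
    Finset.mul_sum, add_comm]
  congr 1
  · refine Finset.sum_congr rfl fun S hS => ?_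
    have hbS : b ∉ S := fun h => hb (Finset.mem_powerset.1 hS h)
    rw [Finset.prod_insert hbS, Finset.card_insert_of_notMem hbS, Finset.insert_sdiff_insert,
      Finset.sdiff_insert_of_notMem hb]
    push_cast
    simp only [sub_le_iff_le_add]
    ring
  · refine Finset.sum_congr rfl fun S hS => ?_
    have hbS : b ∉ S := fun h => hb (Finset.mem_powerset.1 hS h)
    rw [Finset.insert_sdiff_of_notMem _ hbS, Finset.prod_insert (by simp [hb])]
    ring

theorem successTail_nonneg (hq0 : ∀ a, 0 ≤ q a) (hq1 : ∀ a, q a ≤ 1) (F : Finset α) (t : ℝ) :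
    0 ≤ successTail q F t := by
  induction F using Finset.induction_on generalizing t with
  | empty => rw [successTail_empty]; positivity
  | insert b F hb ih =>
    rw [successTail_insert hb]
    have := sub_nonneg.2 (hq1 b)
    have := hq0 b
    have := ih t
    have := ih (t - 1)
    positivity

theorem successTail_le_one (hq0 : ∀ a, 0 ≤ q a) (hq1 : ∀ a, q a ≤ 1) (F : Finset α) (t : ℝ) :
    successTail q F t ≤ 1 := by
  induction F using Finset.induction_on generalizing t with
  | empty => rw [successTail_empty]; split_ifs <;> norm_num
  | insert b F hb ih =>
    rw [successTail_insert hb]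
    nlinarith [hq0 b, hq1 b, ih t, ih (t - 1)]

theorem successTail_antitone (hq0 : ∀ a, 0 ≤ q a) (hq1 : ∀ a, q a ≤ 1) (F : Finset α) :
    Antitone (successTail q F) := by
  induction F using Finset.induction_on with
  | empty =>
    intro t t' h
    simp only [successTail_empty]
    split_ifs <;> linarith
  | insert b F hb ih =>
    intro t t' h
    rw [successTail_insert hb, successTail_insert hb]
    have := sub_nonneg.2 (hq1 b)
    gcongr
    · exact hq0 b
    · exact ih (by linarith)
    · exact ih h

theorem successTail_le_insert (hq0 : ∀ a, 0 ≤ q a) (hq1 : ∀ a, q a ≤ 1) (F : Finset α) (b : α)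
    (t : ℝ) : successTail q F t ≤ successTail q (insert b F) t := by
  by_cases hb : b ∈ F
  · rw [Finset.insert_eq_of_mem hb]
  · rw [successTail_insert hb]
    nlinarith [hq0 b, successTail_antitone hq0 hq1 F (sub_le_self t zero_le_one)]

theorem successTail_mono (hq0 : ∀ a, 0 ≤ q a) (hq1 : ∀ a, q a ≤ 1) {F F' : Finset α}
    (h : F ⊆ F') (t : ℝ) : successTail q F t ≤ successTail q F' t := by
  rw [← Finset.union_sdiff_of_subset h]
  induction F' \ F using Finset.induction_on with
  | empty => simp
  | insert b D _ ih =>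
    rw [Finset.union_insert]
    exact ih.trans (successTail_le_insert hq0 hq1 _ b t)

theorem successTail_of_eq_one {F : Finset α} (h : ∀ a ∈ F, q a = 1) (t : ℝ) :
    successTail q F t = if t ≤ F.card then 1 else 0 := by
  induction F using Finset.induction_on generalizing t with
  | empty => simp
  | insert b F hb ih =>
    rw [successTail_insert hb, h b (Finset.mem_insert_self b F),
      ih (fun a ha => h a (Finset.mem_insert_of_mem ha)), Finset.card_insert_of_notMem hb]
    push_cast
    simp only [sub_le_iff_le_add, one_mul, sub_self, zero_mul, add_zero]

theorem successTail_const (x : ℝ) (F : Finset α) (t : ℝ) :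
    successTail (fun _ => x) F t = ∑ j ∈ Finset.range (F.card + 1),
      if t ≤ j then (F.card.choose j : ℝ) * x ^ j * (1 - x) ^ (F.card - j) else 0 := by
  rw [successTail, Finset.sum_powerset]
  refine Finset.sum_congr rfl fun j _ => ?_
  rw [Finset.sum_congr rfl fun S hS => by
    rw [Finset.prod_const, Finset.prod_const, Finset.card_sdiff_of_subset
      (Finset.mem_powersetCard.1 hS).1, (Finset.mem_powersetCard.1 hS).2]]
  rw [Finset.sum_const, Finset.card_powersetCard, nsmul_eq_mul]
  split_ifs <;> ring


theorem successTail_insert_average {q q' : α → ℝ} {F : Finset α} {b : α} (hb : b ∉ F)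
    (hF : ∀ a ∈ F, q' a = q a) {p : ℝ} (hqb : q b = p * q' b) (t : ℝ) :
    p * successTail q' (insert b F) t + (1 - p) * successTail q' F t =
      successTail q (insert b F) t := by
  rw [successTail_insert hb, successTail_insert hb, successTail_congr hF, successTail_congr hF,
    hqb]
  ring

end SuccessTail

section Survivors

variable {Ω : Type*} (X : ℕ → Ω → ℕ∞) (A : ℕ → Set Ω)

open Classical in
def survivors (m k : ℕ) (ω : Ω) : Finset ℕ :=
  (Finset.Icc 1 m).filter fun a => ∀ i ∈ Finset.Icc 1 k, X i ω = a → ω ∈ A i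

def survivalWeight (p : ℝ) (r k : ℕ) (ω : Ω) (a : ℕ) : ℝ :=
  p ^ (r - countX X k a ω)

def potential (p t : ℝ) (m r k : ℕ) (ω : Ω) : ℝ :=
  successTail (survivalWeight X p r k ω) (survivors X A m k ω) t

def potentialHit (p t : ℝ) (m r k : ℕ) (ω : Ω) : ℝ :=
  successTail (survivalWeight X p r (k + 1) ω) (survivors X A m k ω) t

def potentialMiss (p t : ℝ) (m r k : ℕ) (ω : Ω) : ℝ :=
  successTail (survivalWeight X p r (k + 1) ω)
    ((survivors X A m k ω).filter fun a : ℕ => X (k + 1) ω ≠ a) t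

variable {X A}

theorem mem_survivors {m k a : ℕ} {ω : Ω} :
    a ∈ survivors X A m k ω ↔ a ∈ Finset.Icc 1 m ∧ ∀ i ∈ Finset.Icc 1 k, X i ω = a → ω ∈ A i := by
  classical
  simp [survivors]

theorem survivors_zero (m : ℕ) (ω : Ω) : survivors X A m 0 ω = Finset.Icc 1 m := by
  ext a
  simp [mem_survivors]

theorem survivors_succ (m k : ℕ) (ω : Ω) [Decidable (ω ∈ A (k + 1))] :
    survivors X A m (k + 1) ω = if ω ∈ A (k + 1) then survivors X A m k ω
      else (survivors X A m k ω).filter fun a : ℕ => X (k + 1) ω ≠ a := by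
  ext a
  split_ifs with h <;> simp only [mem_survivors, Finset.mem_filter, Finset.forall_mem_insert,
    ← Finset.insert_Icc_right_eq_Icc_add_one (le_add_left le_rfl)] <;> tauto

theorem countX_zero (a : ℕ) (ω : Ω) : countX X 0 a ω = 0 := by
  simp [countX]

theorem countX_succ (k a : ℕ) (ω : Ω) :
    countX X (k + 1) a ω = countX X k a ω + if X (k + 1) ω = a then 1 else 0 := by
  rw [countX, countX, ← Finset.insert_Icc_right_eq_Icc_add_one (le_add_left le_rfl),
    Finset.filter_insert]
  split_ifs
  · exact Finset.card_insert_of_notMem (by simp)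
  · rfl

theorem countX_mono {k K : ℕ} (h : k ≤ K) (a : ℕ) (ω : Ω) : countX X k a ω ≤ countX X K a ω :=
  Finset.card_le_card (Finset.filter_subset_filter _ (Finset.Icc_subset_Icc_right h))

theorem countX_congr {k : ℕ} {ω ω' : Ω} (h : ∀ i ∈ Finset.Icc 1 k, X i ω = X i ω') (a : ℕ) :
    countX X k a ω = countX X k a ω' := by
  unfold countX
  rw [Finset.filter_congr fun i hi => by rw [h i hi]]

theorem survivalWeight_congr (p : ℝ) (r : ℕ) {k : ℕ} {ω ω' : Ω}
    (h : ∀ i ∈ Finset.Icc 1 k, X i ω = X i ω') :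
    survivalWeight X p r k ω = survivalWeight X p r k ω' :=
  funext fun a => by rw [survivalWeight, survivalWeight, countX_congr h]

theorem survivors_congr (m : ℕ) {k : ℕ} {ω ω' : Ω} (hX : ∀ i ∈ Finset.Icc 1 k, X i ω = X i ω')
    (hA : ∀ i ∈ Finset.Icc 1 k, ω ∈ A i ↔ ω' ∈ A i) :
    survivors X A m k ω = survivors X A m k ω' := by
  ext a
  simp only [mem_survivors]
  refine and_congr_right fun _ => forall₂_congr fun i hi => ?_
  rw [hX i hi, hA i hi]

theorem potential_succ (p t : ℝ) (m r k : ℕ) :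
    potential X A p t m r (k + 1) = potentialMiss X A p t m r k +
      (A (k + 1)).indicator (potentialHit X A p t m r k - potentialMiss X A p t m r k) := by
  classical
  funext ω
  by_cases h : ω ∈ A (k + 1)
  · simp [potential, potentialHit, survivors_succ, h]
  · simp [potential, potentialMiss, survivors_succ, h]

theorem potentialMiss_le_potentialHit {p : ℝ} (hp0 : 0 ≤ p) (hp1 : p ≤ 1) (t : ℝ) (m r k : ℕ)
    (ω : Ω) :
    potentialMiss X A p t m r k ω ≤ potentialHit X A p t m r k ω :=
  successTail_mono (fun _ => pow_nonneg hp0 _) (fun _ => pow_le_one₀ hp0 hp1)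
    (Finset.filter_subset _ _) t

theorem average_potentialHit_potentialMiss (p t : ℝ) {m r k : ℕ} {ω : Ω}
    (hcount : ∀ a ∈ Finset.Icc 1 m, countX X (k + 1) a ω ≤ r) :
    p * potentialHit X A p t m r k ω + (1 - p) * potentialMiss X A p t m r k ω =
      potential X A p t m r k ω := by
  have hweight : ∀ a : ℕ, X (k + 1) ω ≠ a →
      survivalWeight X p r (k + 1) ω a = survivalWeight X p r k ω a := by
    intro a ha
    simp [survivalWeight, countX_succ, ha]
  by_cases hb : ∃ b ∈ survivors X A m k ω, X (k + 1) ω = b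
  · obtain ⟨b, hbF, hXb⟩ := hb
    have hfilter : ((survivors X A m k ω).filter fun a : ℕ => X (k + 1) ω ≠ a) =
        (survivors X A m k ω).erase b := by
      ext a
      simp [hXb, and_comm, eq_comm]
    -- index `k + 1` uses up one of the at most `r` appearances of `b`
    have hcount_b : countX X (k + 1) b ω = countX X k b ω + 1 := by
      simp [countX_succ, hXb]
    have hb_le := hcount b (mem_survivors.1 hbF).1
    rw [potentialHit, potentialMiss, potential, hfilter, ← Finset.insert_erase hbF,
      Finset.erase_insert_eq_erase, Finset.erase_idem]
    refine successTail_insert_average (Finset.notMem_erase b _)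
      (fun a ha => hweight a (hXb ▸ by simpa using (Finset.ne_of_mem_erase ha).symm)) ?_ t
    rw [survivalWeight, survivalWeight, ← pow_succ', hcount_b]
    congr 1
    omega
  · simp only [not_exists, not_and] at hb
    have hfilter : ((survivors X A m k ω).filter fun a : ℕ => X (k + 1) ω ≠ a) =
        survivors X A m k ω := Finset.filter_true_of_mem hb
    have hHit : potentialHit X A p t m r k ω = potential X A p t m r k ω :=
      successTail_congr (fun a ha => hweight a (hb a ha)) t
    rw [potentialMiss, hfilter, ← potentialHit, hHit]
    ring

end Survivors

section Measurability

variable {Ω : Type*}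

theorem measurable_of_factorsThrough {β γ : Type*} [Countable β] [MeasurableSpace γ]
    {m : MeasurableSpace Ω} {H : Ω → β} (hH : ∀ b, MeasurableSet[m] (H ⁻¹' {b})) {D : Ω → γ}
    (hD : D.FactorsThrough H) : Measurable[m] D := by
  intro s _
  have hs : D ⁻¹' s = ⋃ b ∈ H '' (D ⁻¹' s), H ⁻¹' {b} := by
    ext ω
    simp only [Set.mem_preimage, Set.mem_iUnion, Set.mem_image, Set.mem_singleton_iff,
      exists_prop]
    exact ⟨fun h => ⟨H ω, ⟨ω, h, rfl⟩, rfl⟩,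
      fun ⟨_, ⟨ω', hω', hb⟩, hω⟩ => hD (hω.trans hb.symm) ▸ hω'⟩
  rw [hs]
  exact MeasurableSet.biUnion (Set.to_countable _) fun b _ => hH b

variable {X : ℕ → Ω → ℕ∞} {A : ℕ → Set Ω}

theorem comap_le_sigmaXA {i k : ℕ} (hi : i ∈ Finset.Icc 1 k) :
    MeasurableSpace.comap (X i) ⊤ ≤ sigmaXA X A k :=
  le_sup_of_le_left <| le_iSup₂ (f := fun j (_ : j ∈ Finset.Icc 1 k) =>
    MeasurableSpace.comap (X j) ⊤) i hi

theorem measurableSet_sigmaXA {i k : ℕ} (hi : i ∈ Finset.Icc 1 (k - 1)) :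
    MeasurableSet[sigmaXA X A k] (A i) :=
  le_sup_of_le_right (le_iSup₂ (f := fun j (_ : j ∈ Finset.Icc 1 (k - 1)) =>
    MeasurableSpace.generateFrom {A j}) i hi) _ (MeasurableSpace.measurableSet_generateFrom rfl)

theorem sigmaXA_le [mΩ : MeasurableSpace Ω] (hX : ∀ i, Measurable (X i))
    (hA : ∀ i, MeasurableSet (A i)) (k : ℕ) : sigmaXA X A k ≤ mΩ :=
  sup_le (iSup₂_le fun i _ => (hX i).comap_le)
    (iSup₂_le fun i _ => MeasurableSpace.generateFrom_le fun _ hs => hs ▸ hA i)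

theorem measurable_sigmaXA {γ : Type*} [MeasurableSpace γ] {k : ℕ} {D : Ω → γ}
    (hD : ∀ ω ω', (∀ i ∈ Finset.Icc 1 k, X i ω = X i ω') →
      (∀ i ∈ Finset.Icc 1 (k - 1), ω ∈ A i ↔ ω' ∈ A i) → D ω = D ω') :
    Measurable[sigmaXA X A k] D := by
  let H : Ω → (Finset.Icc 1 k → ℕ∞) × (Finset.Icc 1 (k - 1) → Prop) :=
    fun ω => (fun i => X i ω, fun i => ω ∈ A i)
  refine measurable_of_factorsThrough (H := H) (fun b => ?_) fun ω ω' hH => ?_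
  · have hfiber : H ⁻¹' {b} =
        (⋂ i : Finset.Icc 1 k, X i ⁻¹' {b.1 i}) ∩
          ⋂ i : Finset.Icc 1 (k - 1), {ω | (ω ∈ A i) = b.2 i} := by
      ext ω
      simp [H, Prod.ext_iff, funext_iff]
    rw [hfiber]
    refine .inter (.iInter fun i => comap_le_sigmaXA i.2 _ ⟨_, trivial, rfl⟩)
      (.iInter fun i => ?_)
    by_cases hb : b.2 i
    · rw [show {ω | (ω ∈ A i) = b.2 i} = A i by ext; simp [hb]]
      exact measurableSet_sigmaXA i.2
    · rw [show {ω | (ω ∈ A i) = b.2 i} = (A i)ᶜ by ext; simp [hb]]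
      exact (measurableSet_sigmaXA i.2).compl
  · simp only [H, Prod.ext_iff, funext_iff, Subtype.forall, eq_iff_iff] at hH
    exact hD ω ω' hH.1 hH.2

end Measurability

theorem mul_integral_le_setIntegral_of_le_condExp {Ω : Type*} {m mΩ : MeasurableSpace Ω}
    {P : Measure Ω} [IsFiniteMeasure P] (hm : m ≤ mΩ) {A : Set Ω} (hA : MeasurableSet A)
    {D : Ω → ℝ} (hD : StronglyMeasurable[m] D) {C : ℝ} (hD0 : ∀ ω, 0 ≤ D ω)
    (hDC : ∀ ω, D ω ≤ C) {p : ℝ}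
    (hcond : ∀ᵐ ω ∂P, p ≤ (P[A.indicator (fun _ => (1 : ℝ)) | m]) ω) :
    p * ∫ ω, D ω ∂P ≤ ∫ ω in A, D ω ∂P := by
  have hbound : ∀ᵐ ω ∂P, ‖D ω‖ ≤ C := .of_forall fun ω => by
    rw [Real.norm_of_nonneg (hD0 ω)]; exact hDC ω
  have hDm : AEStronglyMeasurable D P := (hD.mono hm).aestronglyMeasurable
  have h1A : Integrable (A.indicator fun _ => (1 : ℝ)) P := (integrable_const 1).indicator hA
  have hDA : D * A.indicator (fun _ => 1) = A.indicator D := by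
    ext ω; by_cases h : ω ∈ A <;> simp [h]
  calc p * ∫ ω, D ω ∂P = ∫ ω, D ω * p ∂P := by rw [← integral_const_mul]; simp_rw [mul_comm]
    _ ≤ ∫ ω, D ω * (P[A.indicator (fun _ => (1 : ℝ)) | m]) ω ∂P := by
      refine integral_mono_ae ((integrable_const p).bdd_mul hDm hbound)
        (integrable_condExp.bdd_mul hDm hbound) ?_
      filter_upwards [hcond] with ω hω
      exact mul_le_mul_of_nonneg_left hω (hD0 ω)
    _ = ∫ ω, (P[D * A.indicator (fun _ => 1) | m]) ω ∂P :=
      integral_congr_ae (condExp_mul_of_stronglyMeasurable_left hD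
        (h1A.bdd_mul hDm hbound) h1A).symm
    _ = ∫ ω in A, D ω ∂P := by
      rw [integral_condExp hm, hDA, integral_indicator hA]

section Potential

variable {Ω : Type*} {X : ℕ → Ω → ℕ∞} {A : ℕ → Set Ω}

theorem measurable_potentialHit (p t : ℝ) (m r k : ℕ) :
    Measurable[sigmaXA X A (k + 1)] (potentialHit X A p t m r k) := by
  refine measurable_sigmaXA fun ω ω' hX hA => ?_
  rw [Nat.add_sub_cancel] at hA
  have hX' : ∀ i ∈ Finset.Icc 1 k, X i ω = X i ω' :=
    fun i hi => hX i (Finset.Icc_subset_Icc_right k.le_succ hi)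
  rw [potentialHit, potentialHit, survivors_congr m hX' hA, survivalWeight_congr p r hX]

theorem measurable_potentialMiss (p t : ℝ) (m r k : ℕ) :
    Measurable[sigmaXA X A (k + 1)] (potentialMiss X A p t m r k) := by
  refine measurable_sigmaXA fun ω ω' hX hA => ?_
  rw [Nat.add_sub_cancel] at hA
  have hX' : ∀ i ∈ Finset.Icc 1 k, X i ω = X i ω' :=
    fun i hi => hX i (Finset.Icc_subset_Icc_right k.le_succ hi)
  rw [potentialMiss, potentialMiss, survivors_congr m hX' hA, survivalWeight_congr p r hX,
    hX (k + 1) (by simp)]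

theorem measurableSet_le_card_survivors [MeasurableSpace Ω] (hX : ∀ i, Measurable (X i))
    (hA : ∀ i, MeasurableSet (A i)) (t : ℝ) (m k : ℕ) :
    MeasurableSet {ω | t ≤ ((survivors X A m k ω).card : ℝ)} := by
  refine measurableSet_setOfPred.2 (Measurable.mono ?_ (sigmaXA_le hX hA (k + 1)) le_rfl)
  refine measurable_sigmaXA fun ω ω' hX' hA' => ?_
  rw [Nat.add_sub_cancel] at hA'
  rw [survivors_congr m (fun i hi => hX' i (Finset.Icc_subset_Icc_right k.le_succ hi)) hA']

variable [MeasurableSpace Ω] {P : Measure Ω} [IsFiniteMeasure P]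

theorem integral_potential_le_succ (hX : ∀ i, Measurable (X i)) (hA : ∀ i, MeasurableSet (A i))
    {p : ℝ} (hp0 : 0 ≤ p) (hp1 : p ≤ 1) (t : ℝ) {m r k : ℕ}
    (hcount : ∀ᵐ ω ∂P, ∀ a ∈ Finset.Icc 1 m, countX X (k + 1) a ω ≤ r)
    (hcond : ∀ᵐ ω ∂P,
      p ≤ (P[(A (k + 1)).indicator (fun _ => (1 : ℝ)) | sigmaXA X A (k + 1)]) ω) :
    ∫ ω, potential X A p t m r k ω ∂P ≤ ∫ ω, potential X A p t m r (k + 1) ω ∂P := by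
  set hit := potentialHit X A p t m r k
  set miss := potentialMiss X A p t m r k
  have hw0 : ∀ j ω a, 0 ≤ survivalWeight X p r j ω a := fun _ _ _ => pow_nonneg hp0 _
  have hw1 : ∀ j ω a, survivalWeight X p r j ω a ≤ 1 := fun _ _ _ => pow_le_one₀ hp0 hp1
  have hhit0 : ∀ ω, 0 ≤ hit ω := fun ω => successTail_nonneg (hw0 _ ω) (hw1 _ ω) _ _
  have hhit1 : ∀ ω, hit ω ≤ 1 := fun ω => successTail_le_one (hw0 _ ω) (hw1 _ ω) _ _
  have hmiss0 : ∀ ω, 0 ≤ miss ω := fun ω => successTail_nonneg (hw0 _ ω) (hw1 _ ω) _ _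
  have hmiss1 : ∀ ω, miss ω ≤ 1 := fun ω => successTail_le_one (hw0 _ ω) (hw1 _ ω) _ _
  have hle := sigmaXA_le hX hA (k + 1)
  have integrable {f : Ω → ℝ} (hf : Measurable[sigmaXA X A (k + 1)] f)
      (hf0 : ∀ ω, 0 ≤ f ω) (hf1 : ∀ ω, f ω ≤ 1) : Integrable f P :=
    .of_bound (hf.mono hle le_rfl).aestronglyMeasurable 1 (.of_forall fun ω => by
      rw [Real.norm_of_nonneg (hf0 ω)]; exact hf1 ω)
  have hhit := integrable (measurable_potentialHit p t m r k) hhit0 hhit1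
  have hmiss := integrable (measurable_potentialMiss p t m r k) hmiss0 hmiss1
  have hgain := mul_integral_le_setIntegral_of_le_condExp hle (hA (k + 1))
    ((measurable_potentialHit p t m r k).sub
      (measurable_potentialMiss p t m r k)).stronglyMeasurable
    (fun ω => sub_nonneg.2 (potentialMiss_le_potentialHit hp0 hp1 t m r k ω)) (C := 1)
    (fun ω => show hit ω - miss ω ≤ 1 by linarith [hhit1 ω, hmiss0 ω]) hcond
  calc ∫ ω, potential X A p t m r k ω ∂P = ∫ ω, p * hit ω + (1 - p) * miss ω ∂P :=
        integral_congr_ae (hcount.mono fun ω h => (average_potentialHit_potentialMiss p t h).symm)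
    _ = ∫ ω, miss ω ∂P + p * ∫ ω, (hit - miss) ω ∂P := by
        rw [integral_add (hhit.const_mul p) (hmiss.const_mul _), integral_const_mul,
          integral_const_mul, Pi.sub_def, integral_sub hhit hmiss]
        ring
    _ ≤ ∫ ω, miss ω ∂P + ∫ ω in A (k + 1), (hit - miss) ω ∂P := by gcongr
    _ = ∫ ω, potential X A p t m r (k + 1) ω ∂P := by
        rw [potential_succ, ← integral_indicator (hA _), ← integral_add hmiss
          ((hhit.sub hmiss).indicator (hA _))]
        rfl

end Potential

section PotentialIntegral

variable {Ω : Type*} {X : ℕ → Ω → ℕ∞} {A : ℕ → Set Ω}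

theorem potential_zero (p t : ℝ) (m r : ℕ) (ω : Ω) :
    potential X A p t m r 0 ω = ∑ j ∈ Finset.range (m + 1),
      if t ≤ j then (m.choose j : ℝ) * (p ^ r) ^ j * (1 - p ^ r) ^ (m - j) else 0 := by
  have hweight : survivalWeight X p r 0 ω = fun _ => p ^ r :=
    funext fun a => by rw [survivalWeight, countX_zero, Nat.sub_zero]
  rw [potential, hweight, survivors_zero, successTail_const, Nat.card_Icc, Nat.add_sub_cancel]

theorem potential_of_countX_eq (p t : ℝ) {m r N : ℕ} {ω : Ω}
    (hcount : ∀ a ∈ Finset.Icc 1 m, countX X N a ω = r) :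
    potential X A p t m r N ω = if t ≤ (survivors X A m N ω).card then 1 else 0 :=
  successTail_of_eq_one (fun a ha => by
    rw [survivalWeight, hcount a (mem_survivors.1 ha).1, Nat.sub_self, pow_zero]) t

theorem card_survivors (m k : ℕ) (ω : Ω) :
    (survivors X A m k ω).card = Nat.card {a : ℕ // a ∈ Finset.Icc 1 m ∧
      ∀ i ∈ Finset.Icc 1 k, X i ω = (a : ℕ∞) → ω ∈ A i} := by
  rw [← Nat.card_eq_finsetCard]
  exact Nat.card_congr (Equiv.subtypeEquivRight fun _ => mem_survivors)

variable [MeasurableSpace Ω] {P : Measure Ω}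

theorem integral_potential_of_countX_eq (hX : ∀ i, Measurable (X i))
    (hA : ∀ i, MeasurableSet (A i)) (p t : ℝ) {m r N : ℕ}
    (hcount : ∀ᵐ ω ∂P, ∀ a ∈ Finset.Icc 1 m, countX X N a ω = r) :
    ∫ ω, potential X A p t m r N ω ∂P = P.real {ω | t ≤ ((survivors X A m N ω).card : ℝ)} := by
  rw [← integral_indicator_one (measurableSet_le_card_survivors hX hA t m N)]
  refine integral_congr_ae (hcount.mono fun ω hω => ?_)
  rw [potential_of_countX_eq p t hω]
  simp [Set.indicator_apply]

variable [IsFiniteMeasure P]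

theorem integral_potential_zero_le (hX : ∀ i, Measurable (X i))
    (hA : ∀ i, MeasurableSet (A i)) {p : ℝ} (hp0 : 0 ≤ p) (hp1 : p ≤ 1) (t : ℝ) {m r N : ℕ}
    (hcount : ∀ᵐ ω ∂P, ∀ a ∈ Finset.Icc 1 m, countX X N a ω = r)
    (hcond : ∀ i ∈ Finset.Icc 1 N, ∀ᵐ ω ∂P,
      p ≤ (P[(A i).indicator (fun _ => (1 : ℝ)) | sigmaXA X A i]) ω)
    {k : ℕ} (hk : k ≤ N) :
    ∫ ω, potential X A p t m r 0 ω ∂P ≤ ∫ ω, potential X A p t m r k ω ∂P := by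
  induction k with
  | zero => exact le_rfl
  | succ k ih =>
    refine (ih (by omega)).trans (integral_potential_le_succ hX hA hp0 hp1 t ?_
      (hcond (k + 1) (Finset.mem_Icc.2 ⟨by omega, hk⟩)))
    filter_upwards [hcount] with ω hω a ha
    exact hω a ha ▸ countX_mono hk a ω

end PotentialIntegral

theorem counters_dominate_binomial_general {Ω : Type*} [MeasurableSpace Ω]
    (P : Measure Ω) [IsProbabilityMeasure P]
    (N m r : ℕ)
    (X : ℕ → Ω → ℕ∞) (hXmeas : ∀ i, @Measurable Ω ℕ∞ _ ⊤ (X i))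
    (hXcount : ∀ᵐ ω ∂P, ∀ a ∈ Finset.Icc 1 m, countX X N a ω = r)
    (A : ℕ → Set Ω) (hA : ∀ i, MeasurableSet (A i))
    (p : ℝ) (hp0 : 0 ≤ p) (hp1 : p ≤ 1)
    (hcond : ∀ i ∈ Finset.Icc 1 N, ∀ᵐ ω ∂P,
      p ≤ (P[(A i).indicator (fun _ => (1 : ℝ)) | sigmaXA X A i]) ω) :
    ∀ t : ℝ,
      (∑ j ∈ Finset.range (m + 1), if t ≤ (j : ℝ) then
          (m.choose j : ℝ) * (p ^ r) ^ j * (1 - p ^ r) ^ (m - j) else 0) ≤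
        (P {ω | t ≤ (Nat.card {a : ℕ // a ∈ Finset.Icc 1 m ∧
          ∀ i ∈ Finset.Icc 1 N, X i ω = (a : ℕ∞) → ω ∈ A i} : ℝ)}).toReal := by
  intro t
  simp_rw [← card_survivors]
  calc _ = ∫ ω, potential X A p t m r 0 ω ∂P := by simp [potential_zero]
    _ ≤ ∫ ω, potential X A p t m r N ω ∂P :=
      integral_potential_zero_le hXmeas hA hp0 hp1 t hXcount hcond le_rfl
    _ = _ := integral_potential_of_countX_eq hXmeas hA p t hXcount

/-- **Lemma (counters).** Let `X_1, …, X_N` take values in `{1,…,m} ∪ {∞}`, a.s. each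
`a ∈ {1,…,m}` appearing exactly `r` times, let `A_1, …, A_N` be events with
`P(A_i ∣ F_i) ≥ p` a.s. where `F_i = σ(X_1,…,X_i,A_1,…,A_{i-1})`, and let
`G_a = ⋂_i ({X_i ≠ a} ∪ A_i)`.  Then `Σ_a 1_{G_a}` stochastically dominates `Bin(m, p^r)`:
for every `t ∈ ℝ`, `P(Σ_a 1_{G_a} ≥ t) ≥ P(Bin(m, p^r) ≥ t)`. -/
theorem counters_dominate_binomial {Ω : Type*} [MeasurableSpace Ω]
    (P : Measure Ω) [IsProbabilityMeasure P]
    (N m r : ℕ) (hN : 0 < N) (hm : 0 < m) (hr : 0 < r)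
    (X : ℕ → Ω → ℕ∞) (hXmeas : ∀ i, @Measurable Ω ℕ∞ _ ⊤ (X i))
    (hXval : ∀ᵐ ω ∂P, ∀ i ∈ Finset.Icc 1 N,
      X i ω = ⊤ ∨ ∃ a ∈ Finset.Icc 1 m, X i ω = (a : ℕ∞))
    (hXcount : ∀ᵐ ω ∂P, ∀ a ∈ Finset.Icc 1 m, countX X N a ω = r)
    (A : ℕ → Set Ω) (hA : ∀ i, MeasurableSet (A i))
    (p : ℝ) (hp0 : 0 ≤ p) (hp1 : p ≤ 1)
    (hcond : ∀ i ∈ Finset.Icc 1 N, ∀ᵐ ω ∂P,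
      p ≤ (P[(A i).indicator (fun _ => (1 : ℝ)) | sigmaXA X A i]) ω) :
    ∀ t : ℝ,
      (∑ j ∈ Finset.range (m + 1), if t ≤ (j : ℝ) then
          (m.choose j : ℝ) * (p ^ r) ^ j * (1 - p ^ r) ^ (m - j) else 0) ≤
        (P {ω | t ≤ (Nat.card {a : ℕ // a ∈ Finset.Icc 1 m ∧
          ∀ i ∈ Finset.Icc 1 N, X i ω = (a : ℕ∞) → ω ∈ A i} : ℝ)}).toReal :=
  counters_dominate_binomial_general P N m r X hXmeas hXcount A hA p hp0 hp1 hcond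
end
end

section
/- Let (Ω, F, P) be a probability space with a filtration F′_1 ⊆ F′_2 ⊆ … ⊆ F′_{N+1} ⊆ F, let p ∈ (0,1], and let A′_1,…,A′_N be events such that A′_i ∈ F′_{i+1} and P(A′_i | F′_i) = p almost surely for every i. Let τ_1 < τ_2 < … < τ_ℓ be stopping times with respect to (F′_i) taking values in {1,…,N}. Then P(∩_{i=1}^{ℓ} A′_{τ_i}) = p^ℓ, where for a stopping time τ the event A′_τ is defined as ∪_{j=1}^N ({τ = j} ∩ A′_j). -/
/-!
Induction on the number of stopping times. Let `B` be the intersection of the first `L` events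
and `σ = τ_{L+1}`. Since every earlier `τ_k` is `< σ` and `A'_i ∈ F'_{i+1}`, each piece
`B ∩ {σ = j}` lies in `F'_j`, so the defining property of `P(A'_j | F'_j) = p` gives
`P(B ∩ {σ = j} ∩ A'_j) = p · P(B ∩ {σ = j})`; summing over `j` yields `P(B ∩ A'_σ) = p · P(B)`.
-/

open MeasureTheory

theorem measureReal_inter_eq_mul_of_condExp_indicator {Ω : Type*} {m m₀ : MeasurableSpace Ω}
    {P : Measure Ω} [IsFiniteMeasure P] (hm : m ≤ m₀) {A S : Set Ω} (hA : MeasurableSet[m₀] A)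
    {p : ℝ} (hcond : ∀ᵐ ω ∂P, (P[A.indicator (fun _ => (1 : ℝ)) | m]) ω = p)
    (hS : MeasurableSet[m] S) :
    P.real (S ∩ A) = p * P.real S := by
  have hint : Integrable (A.indicator fun _ => (1 : ℝ)) P :=
    (integrable_const 1).indicator hA
  calc P.real (S ∩ A) = ∫ ω in S, A.indicator (fun _ => (1 : ℝ)) ω ∂P := by
        rw [integral_indicator_const _ hA, measureReal_restrict_apply hA, smul_eq_mul, mul_one,
          Set.inter_comm]
    _ = ∫ ω in S, (P[A.indicator (fun _ => (1 : ℝ)) | m]) ω ∂P :=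
        (setIntegral_condExp hm hint hS).symm
    _ = ∫ _ in S, p ∂P := setIntegral_congr_ae (hm S hS) (hcond.mono fun _ h _ => h)
    _ = p * P.real S := by rw [setIntegral_const, smul_eq_mul, mul_comm]

theorem measureReal_inter_setOf_mem_eq_mul {Ω ι : Type*} {m₀ : MeasurableSpace Ω}
    {P : Measure Ω} [IsFiniteMeasure P] {F : ι → MeasurableSpace Ω} {s : Finset ι}
    (hF : ∀ j ∈ s, F j ≤ m₀) {A : ι → Set Ω} (hA : ∀ j ∈ s, MeasurableSet[m₀] (A j)) {p : ℝ}
    (hcond : ∀ j ∈ s, ∀ᵐ ω ∂P, (P[(A j).indicator (fun _ => (1 : ℝ)) | F j]) ω = p)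
    {τ : Ω → ι} (hτ : ∀ ω, τ ω ∈ s) {B : Set Ω}
    (hB : ∀ j ∈ s, MeasurableSet[F j] (B ∩ {ω | τ ω = j})) :
    P.real (B ∩ {ω | ω ∈ A (τ ω)}) = p * P.real B := by
  set C : ι → Set Ω := fun j => B ∩ {ω | τ ω = j}
  have hC : ∀ j ∈ s, MeasurableSet[m₀] (C j) := fun j hj => hF j hj _ (hB j hj)
  have hdisj : (s : Set ι).PairwiseDisjoint C :=
    (Set.pairwiseDisjoint_fiber τ s).mono fun _ => Set.inter_subset_right
  have hB_eq : B = ⋃ j ∈ s, C j := by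
    ext ω; simp [C, hτ ω]
  have hBA_eq : B ∩ {ω | ω ∈ A (τ ω)} = ⋃ j ∈ s, C j ∩ A j := by
    ext ω; simp [C, hτ ω]
  calc P.real (B ∩ {ω | ω ∈ A (τ ω)}) = ∑ j ∈ s, P.real (C j ∩ A j) := by
        rw [hBA_eq, measureReal_biUnion_finset
          (hdisj.mono fun _ => Set.inter_subset_left) fun j hj => (hC j hj).inter (hA j hj)]
    _ = ∑ j ∈ s, p * P.real (C j) := Finset.sum_congr rfl fun j hj =>
        measureReal_inter_eq_mul_of_condExp_indicator (hF j hj) (hA j hj) (hcond j hj) (hB j hj)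
    _ = p * P.real B := by
        rw [← Finset.mul_sum, ← measureReal_biUnion_finset hdisj hC, ← hB_eq]

def IsStoppingTimeIcc {Ω : Type*} (F : ℕ → MeasurableSpace Ω) (N : ℕ) (τ : Ω → ℕ) : Prop :=
  (∀ ω, τ ω ∈ Finset.Icc 1 N) ∧ ∀ i ∈ Finset.Icc 1 N, MeasurableSet[F i] {ω | τ ω ≤ i}

section StoppingTime

variable {Ω : Type*} {F : ℕ → MeasurableSpace Ω} {N : ℕ} {τ : Ω → ℕ}

theorem IsStoppingTimeIcc.measurableSet_eq
    (hmono : ∀ i j : ℕ, 1 ≤ i → i ≤ j → j ≤ N + 1 → F i ≤ F j)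
    (hτ : IsStoppingTimeIcc F N τ) {i : ℕ} (hi : i ∈ Finset.Icc 1 N) :
    MeasurableSet[F i] {ω | τ ω = i} := by
  obtain ⟨hi1, hiN⟩ := Finset.mem_Icc.mp hi
  have hpred : MeasurableSet[F i] {ω | τ ω ≤ i - 1} := by
    rcases Nat.lt_or_ge 1 i with h | h
    · exact hmono (i - 1) i (by omega) (by omega) (by omega) _
        (hτ.2 (i - 1) (Finset.mem_Icc.mpr ⟨by omega, by omega⟩))
    · convert @MeasurableSet.empty _ (F i)
      ext ω
      have := Finset.mem_Icc.mp (hτ.1 ω)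
      simp only [Set.mem_ofPred_eq, Set.mem_empty_iff_false, iff_false]
      omega
  have h_eq : {ω | τ ω = i} = {ω | τ ω ≤ i} \ {ω | τ ω ≤ i - 1} := by
    ext ω; simp only [Set.mem_ofPred_eq, Set.mem_sdiff]; omega
  rw [h_eq]
  exact (hτ.2 i hi).diff hpred

theorem IsStoppingTimeIcc.measurableSet_inter_lt
    (hmono : ∀ i j : ℕ, 1 ≤ i → i ≤ j → j ≤ N + 1 → F i ≤ F j) {A : ℕ → Set Ω}
    (hA : ∀ i ∈ Finset.Icc 1 N, MeasurableSet[F (i + 1)] (A i))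
    (hτ : IsStoppingTimeIcc F N τ) {j : ℕ} (hj : j ≤ N) :
    MeasurableSet[F j] ({ω | ω ∈ A (τ ω)} ∩ {ω | τ ω < j}) := by
  have h_eq : {ω | ω ∈ A (τ ω)} ∩ {ω | τ ω < j} =
      ⋃ i ∈ Finset.Ico 1 j, {ω | τ ω = i} ∩ A i := by
    ext ω
    have := Finset.mem_Icc.mp (hτ.1 ω)
    simp only [Set.mem_inter_iff, Set.mem_ofPred_eq, Set.mem_iUnion, Finset.mem_Ico, exists_prop]
    constructor
    · rintro ⟨hA, hlt⟩
      exact ⟨τ ω, ⟨this.1, hlt⟩, rfl, hA⟩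
    · rintro ⟨i, hi, rfl, hA⟩
      exact ⟨hA, hi.2⟩
  rw [h_eq]
  refine Finset.measurableSet_biUnion _ fun i hi => ?_
  obtain ⟨hi1, hij⟩ := Finset.mem_Ico.mp hi
  have hi : i ∈ Finset.Icc 1 N := Finset.mem_Icc.mpr ⟨hi1, by omega⟩
  exact (hmono i j hi1 hij.le (by omega) _ (hτ.measurableSet_eq hmono hi)).inter
    (hmono (i + 1) j (by omega) hij (by omega) _ (hA i hi))

theorem measurableSet_biInter_inter_eq
    (hmono : ∀ i j : ℕ, 1 ≤ i → i ≤ j → j ≤ N + 1 → F i ≤ F j) {A : ℕ → Set Ω}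
    (hA : ∀ i ∈ Finset.Icc 1 N, MeasurableSet[F (i + 1)] (A i)) {s : Finset ℕ}
    {τ : ℕ → Ω → ℕ} (hτ : ∀ k ∈ s, IsStoppingTimeIcc F N (τ k)) {σ : Ω → ℕ}
    (hσ : IsStoppingTimeIcc F N σ) (hlt : ∀ ω, ∀ k ∈ s, τ k ω < σ ω) {j : ℕ}
    (hj : j ∈ Finset.Icc 1 N) :
    MeasurableSet[F j] ((⋂ k ∈ s, {ω | ω ∈ A (τ k ω)}) ∩ {ω | σ ω = j}) := by
  have h_eq : (⋂ k ∈ s, {ω | ω ∈ A (τ k ω)}) ∩ {ω | σ ω = j} =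
      (⋂ k ∈ s, {ω | ω ∈ A (τ k ω)} ∩ {ω | τ k ω < j}) ∩ {ω | σ ω = j} := by
    ext ω
    simp only [Set.mem_inter_iff, Set.mem_iInter, Set.mem_ofPred_eq]
    constructor
    · rintro ⟨hA, rfl⟩
      exact ⟨fun k hk => ⟨hA k hk, hlt ω k hk⟩, rfl⟩
    · rintro ⟨hA, rfl⟩
      exact ⟨fun k hk => (hA k hk).1, rfl⟩
  rw [h_eq]
  exact (Finset.measurableSet_biInter _ fun k hk =>
    (hτ k hk).measurableSet_inter_lt hmono hA (Finset.mem_Icc.mp hj).2).inter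
    (hσ.measurableSet_eq hmono hj)

end StoppingTime

theorem prob_of_events_at_stopping_times_general {Ω : Type*} [MeasurableSpace Ω]
    (P : Measure Ω) [IsProbabilityMeasure P] (N : ℕ)
    (F : ℕ → MeasurableSpace Ω)
    (hmono : ∀ i j : ℕ, 1 ≤ i → i ≤ j → j ≤ N + 1 → F i ≤ F j)
    (hle : ∀ i ∈ Finset.Icc 1 (N + 1), F i ≤ ‹MeasurableSpace Ω›)
    (p : ℝ)
    (A : ℕ → Set Ω) (hA : ∀ i ∈ Finset.Icc 1 N, MeasurableSet[F (i + 1)] (A i))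
    (hcond : ∀ i ∈ Finset.Icc 1 N, ∀ᵐ ω ∂P,
      (P[(A i).indicator (fun _ => (1 : ℝ)) | F i]) ω = p)
    (L : ℕ) (τ : ℕ → Ω → ℕ)
    (hτval : ∀ k ∈ Finset.Icc 1 L, ∀ ω, τ k ω ∈ Finset.Icc 1 N)
    (hτstop : ∀ k ∈ Finset.Icc 1 L, ∀ i ∈ Finset.Icc 1 N,
      MeasurableSet[F i] {ω | τ k ω ≤ i})
    (hτmono : ∀ ω, ∀ k ∈ Finset.Icc 1 L, ∀ k' ∈ Finset.Icc 1 L,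
      k < k' → τ k ω < τ k' ω) :
    (P (⋂ k ∈ Finset.Icc 1 L, {ω | ω ∈ A (τ k ω)})).toReal = p ^ L := by
  have hF : ∀ j ∈ Finset.Icc 1 N, F j ≤ ‹MeasurableSpace Ω› := fun j hj =>
    hle j (Finset.Icc_subset_Icc_right N.le_succ hj)
  have hA' : ∀ i ∈ Finset.Icc 1 N, MeasurableSet (A i) := fun i hi =>
    hle (i + 1) (by simp only [Finset.mem_Icc] at hi ⊢; omega) _ (hA i hi)
  induction L with
  | zero => simp
  | succ L ih =>
    have hsub : Finset.Icc 1 L ⊆ Finset.Icc 1 (L + 1) := Finset.Icc_subset_Icc_right L.le_succ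
    have hlast : L + 1 ∈ Finset.Icc 1 (L + 1) := Finset.right_mem_Icc.mpr L.succ_pos
    have hstop : ∀ k ∈ Finset.Icc 1 (L + 1), IsStoppingTimeIcc F N (τ k) := fun k hk =>
      ⟨hτval k hk, hτstop k hk⟩
    have hlt : ∀ ω, ∀ k ∈ Finset.Icc 1 L, τ k ω < τ (L + 1) ω := fun ω k hk =>
      hτmono ω k (hsub hk) _ hlast (Nat.lt_succ_of_le (Finset.mem_Icc.mp hk).2)
    set B := ⋂ k ∈ Finset.Icc 1 L, {ω | ω ∈ A (τ k ω)}
    have hB : ∀ j ∈ Finset.Icc 1 N, MeasurableSet[F j] (B ∩ {ω | τ (L + 1) ω = j}) :=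
      fun j hj => measurableSet_biInter_inter_eq hmono hA (fun k hk => hstop k (hsub hk))
        (hstop _ hlast) hlt hj
    calc (P (⋂ k ∈ Finset.Icc 1 (L + 1), {ω | ω ∈ A (τ k ω)})).toReal
        = P.real (B ∩ {ω | ω ∈ A (τ (L + 1) ω)}) := by
          rw [← Finset.insert_Icc_right_eq_Icc_add_one (a := 1) L.succ_pos,
            Finset.set_biInter_insert, Set.inter_comm, measureReal_def]
      _ = p * P.real B := measureReal_inter_setOf_mem_eq_mul hF hA' hcond (hstop _ hlast).1 hB
      _ = p ^ (L + 1) := by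
          rw [measureReal_def, ih (fun k hk => hτval k (hsub hk))
            (fun k hk => hτstop k (hsub hk))
            (fun ω k hk k' hk' => hτmono ω k (hsub hk) k' (hsub hk')), pow_succ']

/-- **Lemma (stopping times).** Let `F'_1 ⊆ ⋯ ⊆ F'_{N+1}` be a filtration, `p ∈ (0,1]`,
and `A'_1, …, A'_N` events with `A'_i ∈ F'_{i+1}` and `P(A'_i ∣ F'_i) = p` a.s.
If `τ_1 < ⋯ < τ_L` are stopping times with values in `{1,…,N}`, then
`P(⋂_i A'_{τ_i}) = p^L`, where `A'_τ = ⋃_j ({τ = j} ∩ A'_j)`. -/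
theorem prob_of_events_at_stopping_times {Ω : Type*} [MeasurableSpace Ω]
    (P : Measure Ω) [IsProbabilityMeasure P] (N : ℕ) (hN : 0 < N)
    (F : ℕ → MeasurableSpace Ω)
    (hmono : ∀ i j : ℕ, 1 ≤ i → i ≤ j → j ≤ N + 1 → F i ≤ F j)
    (hle : ∀ i ∈ Finset.Icc 1 (N + 1), F i ≤ ‹MeasurableSpace Ω›)
    (p : ℝ) (hp0 : 0 < p) (hp1 : p ≤ 1)
    (A : ℕ → Set Ω) (hA : ∀ i ∈ Finset.Icc 1 N, MeasurableSet[F (i + 1)] (A i))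
    (hcond : ∀ i ∈ Finset.Icc 1 N, ∀ᵐ ω ∂P,
      (P[(A i).indicator (fun _ => (1 : ℝ)) | F i]) ω = p)
    (L : ℕ) (τ : ℕ → Ω → ℕ)
    (hτval : ∀ k ∈ Finset.Icc 1 L, ∀ ω, τ k ω ∈ Finset.Icc 1 N)
    (hτstop : ∀ k ∈ Finset.Icc 1 L, ∀ i ∈ Finset.Icc 1 N,
      MeasurableSet[F i] {ω | τ k ω ≤ i})
    (hτmono : ∀ ω, ∀ k ∈ Finset.Icc 1 L, ∀ k' ∈ Finset.Icc 1 L,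
      k < k' → τ k ω < τ k' ω) :
    (P (⋂ k ∈ Finset.Icc 1 L, {ω | ω ∈ A (τ k ω)})).toReal = p ^ L :=
  prob_of_events_at_stopping_times_general P N F hmono hle p A hA hcond L τ hτval hτstop hτmono
end

section
/- Let ω be a geometrically realizable sorting network of size n, let m ≥ 2, and let γ be a sorting network of size m. Suppose that γ, viewed as a pattern, occurs in ω at time interval [1, t] for some t and at position [a, a+m−2] for some a. Then γ is geometrically realizable. -/
noncomputable section

/-- The adjacent transposition (swap) `σ_j = (j, j+1)`, acting on `ℕ` (we use labels `1,…,n`). -/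
def swapPerm (j : ℕ) : Equiv.Perm ℕ := Equiv.swap j (j + 1)

/-- A sorting network of size `n` is a sequence `s` of `N = n(n-1)/2` integers with
`0 < s_k < n` such that `σ_{s_1} σ_{s_2} ⋯ σ_{s_N}` (with composition `(στ)(i) = σ(τ(i))`)
is the reverse permutation of `{1,…,n}`. -/
def IsSortingNetwork (n : ℕ) (s : List ℕ) : Prop :=
  2 ≤ n ∧ s.length = n * (n - 1) / 2 ∧ (∀ x ∈ s, 0 < x ∧ x < n) ∧
    ∀ i ∈ Finset.Icc 1 n, (s.map swapPerm).prod i = n + 1 - i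

/-- A pattern is an initial segment of some sorting network. -/
def IsPattern (γ : List ℕ) : Prop :=
  ∃ n s, IsSortingNetwork n s ∧ γ <+: s

/-- The size of a pattern: one more than its maximal element. -/
def patternSize (γ : List ℕ) : ℕ := γ.foldr max 0 + 1

/-- The pattern `γ` occurs in the sorting network `s` of size `n` at time interval
`[i,j] ⊆ [1, s.length]` and position `[a,b] ⊆ [1, n-1]`: the subsequence of `s_i,…,s_j`
consisting of the elements lying in `[a,b]` is exactly `γ` shifted by `a - 1`, and no swap
in the time window occurs at positions `a-1` or `b+1`. -/
def OccursAt (γ : List ℕ) (n : ℕ) (s : List ℕ) (i j a b : ℕ) : Prop :=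
  1 ≤ i ∧ i ≤ j ∧ j ≤ s.length ∧ 1 ≤ a ∧ a ≤ b ∧ b ≤ n - 1 ∧
    ((s.drop (i - 1)).take (j + 1 - i)).filter (fun x => decide (a ≤ x ∧ x ≤ b))
      = γ.map (fun u => u + a - 1) ∧
    ∀ x ∈ (s.drop (i - 1)).take (j + 1 - i), x ≠ a - 1 ∧ x ≠ b + 1

/-- The pattern `γ` occurs at least `R` times in `s` : there are `R` pairwise disjoint
rectangles `[i_r, j_r] × [a_r, b_r]` at each of which `γ` occurs. -/
def OccursAtLeast (γ : List ℕ) (n : ℕ) (s : List ℕ) (R : ℕ) : Prop :=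
  ∃ rect : Fin R → (ℕ × ℕ) × (ℕ × ℕ),
    (∀ r, OccursAt γ n s (rect r).1.1 (rect r).1.2 (rect r).2.1 (rect r).2.2) ∧
    ∀ r r', r ≠ r' →
      Disjoint
        (Finset.Icc (rect r).1.1 (rect r).1.2 ×ˢ Finset.Icc (rect r).2.1 (rect r).2.2)
        (Finset.Icc (rect r').1.1 (rect r').1.2 ×ˢ Finset.Icc (rect r').2.1 (rect r').2.2)

/-- Rotation of the plane by angle `φ` about the origin. -/
def rotPt (φ : ℝ) (p : ℝ × ℝ) : ℝ × ℝ :=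
  (p.1 * Real.cos φ - p.2 * Real.sin φ, p.1 * Real.sin φ + p.2 * Real.cos φ)

/-- 2×2 determinant of two plane vectors. -/
def det2 (u v : ℝ × ℝ) : ℝ := u.1 * v.2 - u.2 * v.1

/-- A sorting network `s` of size `n` is geometrically realizable if there is a configuration
`x_1, …, x_n` of points in the plane (labeled in increasing order of first coordinate, with
no two points on a common vertical line, no three collinear, and no two distinct pairs
determining parallel lines) and angles `0 < φ_1 < ⋯ < φ_N < π` such that for every angle
`ψ ∈ (0,π)` different from all `φ_t`, reading the labels of the points rotated by `ψ` in
increasing order of first coordinate gives the permutation `σ_{s_1} ∘ ⋯ ∘ σ_{s_k}`, where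
`k = #{t : φ_t < ψ}`.  (In particular the permutation changes exactly at the angles `φ_t`,
by the adjacent transposition at position `s_t`.) -/
def GeometricallyRealizable (n : ℕ) (s : List ℕ) : Prop :=
  ∃ x : ℕ → ℝ × ℝ,
    (∀ i ∈ Finset.Icc 1 n, ∀ j ∈ Finset.Icc 1 n, i < j → (x i).1 < (x j).1) ∧
    (∀ i ∈ Finset.Icc 1 n, ∀ j ∈ Finset.Icc 1 n, ∀ k ∈ Finset.Icc 1 n,
      i ≠ j → i ≠ k → j ≠ k → det2 (x j - x i) (x k - x i) ≠ 0) ∧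
    (∀ i ∈ Finset.Icc 1 n, ∀ j ∈ Finset.Icc 1 n, ∀ k ∈ Finset.Icc 1 n, ∀ l ∈ Finset.Icc 1 n,
      i ≠ j → k ≠ l → ({i, j} : Finset ℕ) ≠ {k, l} → det2 (x j - x i) (x l - x k) ≠ 0) ∧
    ∃ φ : ℕ → ℝ,
      (∀ t ∈ Finset.Icc 1 s.length, 0 < φ t ∧ φ t < Real.pi) ∧
      (∀ t ∈ Finset.Icc 1 s.length, ∀ t' ∈ Finset.Icc 1 s.length, t < t' → φ t < φ t') ∧
      ∀ ψ : ℝ, 0 < ψ → ψ < Real.pi → (∀ t ∈ Finset.Icc 1 s.length, ψ ≠ φ t) →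
        ∀ u ∈ Finset.Icc 1 n, ∀ v ∈ Finset.Icc 1 n, u < v →
          (rotPt ψ (x (((s.take
              (((Finset.Icc 1 s.length).filter (fun t => φ t < ψ)).card)).map swapPerm).prod
              u))).1 <
          (rotPt ψ (x (((s.take
              (((Finset.Icc 1 s.length).filter (fun t => φ t < ψ)).card)).map swapPerm).prod
              v))).1

/-!
No swap among the first `t` steps of `ω` crosses the boundary of the block of positions
`a, …, a + m - 1`, so up to time `t` these positions carry the labels `a, …, a + m - 1`,
permuted exactly as the prefixes of `γ` permute `1, …, m`. Hence the points `x_a, …, x_{a+m-1}`,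
together with the angles at which `ω` performs its swaps inside the block, read as the right
prefix of `γ` at every angle strictly between two consecutive angles of `ω` up to time `t`.
Any other angle is reduced to one of these because the horizontal order of two rotated points
changes only once on `(0, π)`: a pair that is still in order stays so at smaller angles, and a
reversed pair stays reversed at larger ones.
-/

open Finset

lemma rotPt_fst_sub_mul_sin (p q : ℝ × ℝ) (ψ w : ℝ) :
    ((rotPt ψ p).1 - (rotPt ψ q).1) * Real.sin w
      = ((rotPt w p).1 - (rotPt w q).1) * Real.sin ψ + (p.1 - q.1) * Real.sin (w - ψ) := by
  simp only [rotPt, Real.sin_sub]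
  ring

lemma rotPt_fst_lt_of_le {p q : ℝ × ℝ} (hpq : p.1 < q.1) {ψ w : ℝ} (hψ : 0 < ψ) (hψw : ψ ≤ w)
    (hw : w < Real.pi) (h : (rotPt w p).1 < (rotPt w q).1) :
    (rotPt ψ p).1 < (rotPt ψ q).1 := by
  have hsinψ : 0 < Real.sin ψ := Real.sin_pos_of_pos_of_lt_pi hψ (hψw.trans_lt hw)
  have hsinw : 0 < Real.sin w := Real.sin_pos_of_pos_of_lt_pi (hψ.trans_le hψw) hw
  have hsin : 0 ≤ Real.sin (w - ψ) :=
    Real.sin_nonneg_of_nonneg_of_le_pi (sub_nonneg.2 hψw) (by linarith)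
  have hneg : ((rotPt ψ p).1 - (rotPt ψ q).1) * Real.sin w < 0 := by
    rw [rotPt_fst_sub_mul_sin]
    exact add_neg_of_neg_of_nonpos (mul_neg_of_neg_of_pos (sub_neg.2 h) hsinψ)
      (mul_nonpos_of_nonpos_of_nonneg (sub_nonpos.2 hpq.le) hsin)
  exact sub_neg.1 (neg_of_mul_neg_left hneg hsinw.le)

lemma rotPt_fst_lt_of_ge {p q : ℝ × ℝ} (hpq : p.1 < q.1) {ψ w : ℝ} (hw : 0 < w) (hwψ : w ≤ ψ)
    (hψ : ψ < Real.pi) (h : (rotPt w q).1 < (rotPt w p).1) :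
    (rotPt ψ q).1 < (rotPt ψ p).1 := by
  have hsinψ : 0 < Real.sin ψ := Real.sin_pos_of_pos_of_lt_pi (hw.trans_le hwψ) hψ
  have hsinw : 0 < Real.sin w := Real.sin_pos_of_pos_of_lt_pi hw (hwψ.trans_lt hψ)
  have hsin : Real.sin (w - ψ) ≤ 0 :=
    Real.sin_nonpos_of_nonpos_of_neg_pi_le (sub_nonpos.2 hwψ) (by linarith)
  have hpos : 0 < ((rotPt ψ p).1 - (rotPt ψ q).1) * Real.sin w := by
    rw [rotPt_fst_sub_mul_sin]
    exact add_pos_of_pos_of_nonneg (mul_pos (sub_pos.2 h) hsinψ)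
      (mul_nonneg_of_nonpos_of_nonpos (sub_nonpos.2 hpq.le) hsin)
  exact sub_pos.1 (pos_of_mul_pos_left hpos hsinw.le)

def inBlock (d m g : ℕ) : Bool := decide (d < g ∧ g < d + m)

lemma swapPerm_add_apply (g d v : ℕ) : swapPerm (g + d) (v + d) = swapPerm g v + d := by
  unfold swapPerm
  rcases eq_or_ne v g with rfl | hvg
  · simp only [Equiv.swap_apply_left]; omega
  rcases eq_or_ne v (g + 1) with rfl | hvg'
  · rw [add_right_comm, Equiv.swap_apply_right, Equiv.swap_apply_right]
  · rw [Equiv.swap_apply_of_ne_of_ne hvg hvg', Equiv.swap_apply_of_ne_of_ne (by omega) (by omega)]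

lemma prod_map_swapPerm_map_add_apply (L : List ℕ) (d u : ℕ) :
    ((L.map (· + d)).map swapPerm).prod (u + d) = (L.map swapPerm).prod u + d := by
  induction L with
  | nil => rfl
  | cons g L ih =>
    simp only [List.map_cons, List.prod_cons, Equiv.Perm.mul_apply, ih, swapPerm_add_apply]

lemma swapPerm_mem_Icc {d m g u : ℕ} (hg : d < g ∧ g < d + m) (hu : u ∈ Icc (d + 1) (d + m)) :
    swapPerm g u ∈ Icc (d + 1) (d + m) := by
  rw [mem_Icc] at hu ⊢
  unfold swapPerm
  rcases eq_or_ne u g with rfl | hug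
  · rw [Equiv.swap_apply_left]; omega
  rcases eq_or_ne u (g + 1) with rfl | hug'
  · rw [Equiv.swap_apply_right]; omega
  · rw [Equiv.swap_apply_of_ne_of_ne hug hug']; omega

lemma prod_map_swapPerm_mem_Icc {d m : ℕ} {L : List ℕ} (hL : ∀ g ∈ L, d < g ∧ g < d + m)
    {u : ℕ} (hu : u ∈ Icc (d + 1) (d + m)) : (L.map swapPerm).prod u ∈ Icc (d + 1) (d + m) := by
  induction L with
  | nil => exact hu
  | cons g L ih =>
    simp only [List.forall_mem_cons] at hL
    exact swapPerm_mem_Icc hL.1 (ih hL.2)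

lemma prod_map_swapPerm_filter_apply {d m : ℕ} {L : List ℕ} (hL : ∀ g ∈ L, g ≠ d ∧ g ≠ d + m)
    {u : ℕ} (hu : u ∈ Icc (d + 1) (d + m)) :
    (L.map swapPerm).prod u = ((L.filter (inBlock d m)).map swapPerm).prod u := by
  induction L with
  | nil => rfl
  | cons g L ih =>
    simp only [List.forall_mem_cons] at hL
    by_cases hg : d < g ∧ g < d + m
    · rw [List.filter_cons_of_pos (by simpa [inBlock] using hg)]
      simp only [List.map_cons, List.prod_cons, Equiv.Perm.mul_apply, ih hL.2]
    · rw [List.filter_cons_of_neg (by simpa [inBlock] using hg)]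
      simp only [List.map_cons, List.prod_cons, Equiv.Perm.mul_apply, ih hL.2]
      have hin := prod_map_swapPerm_mem_Icc (L := L.filter (inBlock d m))
        (fun g hg => by simpa [inBlock] using (List.mem_filter.1 hg).2) hu
      rw [mem_Icc] at hin
      exact Equiv.swap_apply_of_ne_of_ne (by omega) (by omega)

def prefixPerm (s : List ℕ) (k : ℕ) : Equiv.Perm ℕ := ((s.take k).map swapPerm).prod

lemma IsSortingNetwork.prefixPerm_length_apply {m : ℕ} {γ : List ℕ} (hγ : IsSortingNetwork m γ)
    {u : ℕ} (hu : u ∈ Icc 1 m) : prefixPerm γ γ.length u = m + 1 - u := by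
  rw [prefixPerm, List.take_length]
  exact hγ.2.2.2 u hu

lemma IsSortingNetwork.prefixPerm_mem_Icc {m : ℕ} {γ : List ℕ} (hγ : IsSortingNetwork m γ)
    (r : ℕ) {u : ℕ} (hu : u ∈ Icc 1 m) : prefixPerm γ r u ∈ Icc 1 m := by
  simpa [prefixPerm] using prod_map_swapPerm_mem_Icc (d := 0) (L := γ.take r)
    (fun g hg => by simpa using hγ.2.2.1 g (List.mem_of_mem_take hg)) (by simpa using hu)

/-- The first `t` swaps of `ω` act on the positions `d + 1, …, d + m` as `γ` acts on `1, …, m`. -/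
def OccursAtStart (γ ω : List ℕ) (t d m : ℕ) : Prop :=
  (ω.take t).filter (inBlock d m) = γ.map (· + d) ∧ ∀ g ∈ ω.take t, g ≠ d ∧ g ≠ d + m

lemma OccursAt.occursAtStart {γ ω : List ℕ} {n t a m : ℕ} (h : OccursAt γ n ω 1 t a (a + m - 2))
    (hm : 0 < m) : OccursAtStart γ ω t (a - 1) m := by
  obtain ⟨-, -, -, ha, -, -, hfil, hbd⟩ := h
  simp only [Nat.sub_self, List.drop_zero, Nat.add_sub_cancel] at hfil hbd
  refine ⟨?_, fun g hg => by have := hbd g hg; omega⟩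
  calc (ω.take t).filter (inBlock (a - 1) m)
      = (ω.take t).filter (fun g => decide (a ≤ g ∧ g ≤ a + m - 2)) :=
        List.filter_congr fun g _ => by simp only [inBlock, decide_eq_decide]; omega
    _ = γ.map (· + (a - 1)) := hfil.trans (List.map_congr_left fun u _ => by omega)

lemma OccursAtStart.countP_take {γ ω : List ℕ} {t d m : ℕ} (h : OccursAtStart γ ω t d m) :
    (ω.take t).countP (inBlock d m) = γ.length := by
  rw [List.countP_eq_length_filter, h.1, List.length_map]

lemma OccursAtStart.prefixPerm_add_apply {γ ω : List ℕ} {t d m : ℕ} (h : OccursAtStart γ ω t d m)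
    {K : ℕ} (hK : K ≤ t) {u : ℕ} (hu : u ∈ Icc 1 m) :
    prefixPerm ω K (u + d) = prefixPerm γ ((ω.take K).countP (inBlock d m)) u + d := by
  have hpre : (ω.take K).filter (inBlock d m) <+: γ.map (· + d) :=
    h.1 ▸ (List.take_prefix_take_left hK).filter _
  have hfilK : (ω.take K).filter (inBlock d m)
      = ((γ.take ((ω.take K).countP (inBlock d m))).map (· + d)) := by
    rw [List.map_take, List.countP_eq_length_filter]
    exact List.prefix_iff_eq_take.1 hpre
  have hbd : ∀ g ∈ ω.take K, g ≠ d ∧ g ≠ d + m :=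
    fun g hg => h.2 g ((List.take_prefix_take_left hK).subset hg)
  rw [prefixPerm, prod_map_swapPerm_filter_apply hbd (by simp at hu ⊢; omega)]
  exact (congrArg (fun L => (L.map swapPerm).prod (u + d)) hfilK).trans
    (prod_map_swapPerm_map_add_apply _ d u)

section NthTime

variable {α : Type*} (p : α → Bool) (ω : List α)

/-- The (1-based) position in `ω` of its `r`-th entry satisfying `p`. -/
def nthTime (r : ℕ) : ℕ := sInf {K | r ≤ (ω.take K).countP p}

lemma countP_take_add_one_le (K : ℕ) :
    (ω.take (K + 1)).countP p ≤ (ω.take K).countP p + 1 := by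
  rw [List.take_add_one, List.countP_append]
  have : ω[K]?.toList.countP p ≤ 1 := List.countP_le_length.trans (by cases ω[K]? <;> simp)
  omega

variable {p ω}

lemma nthTime_spec {r t : ℕ} (hr : 1 ≤ r) (hrt : r ≤ (ω.take t).countP p) :
    1 ≤ nthTime p ω r ∧ nthTime p ω r ≤ t ∧ (ω.take (nthTime p ω r)).countP p = r ∧
      (ω.take (nthTime p ω r - 1)).countP p + 1 = r := by
  have hmem : t ∈ {K | r ≤ (ω.take K).countP p} := hrt
  have hreach : r ≤ (ω.take (nthTime p ω r)).countP p := Nat.sInf_mem ⟨t, hmem⟩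
  have hle : nthTime p ω r ≤ t := Nat.sInf_le hmem
  have hpos : 1 ≤ nthTime p ω r := by
    by_contra h0
    rw [Nat.lt_one_iff.1 (not_le.1 h0), List.take_zero, List.countP_nil] at hreach
    omega
  have hbefore : nthTime p ω r - 1 ∉ {K | r ≤ (ω.take K).countP p} :=
    Nat.notMem_of_lt_sInf (Nat.sub_one_lt (Nat.one_le_iff_ne_zero.1 hpos))
  replace hbefore : (ω.take (nthTime p ω r - 1)).countP p < r := not_le.1 hbefore
  have hstep := countP_take_add_one_le p ω (nthTime p ω r - 1)
  rw [Nat.sub_add_cancel hpos] at hstep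
  omega

lemma nthTime_strictMonoOn {t : ℕ} :
    StrictMonoOn (nthTime p ω) (Icc 1 ((ω.take t).countP p)) := by
  intro r hr r' hr' hrr'
  simp only [coe_Icc, Set.mem_Icc] at hr hr'
  obtain ⟨-, -, hK, -⟩ := nthTime_spec hr.1 hr.2
  obtain ⟨-, -, hK', -⟩ := nthTime_spec hr'.1 hr'.2
  by_contra hge
  have := (List.take_prefix_take_left (l := ω) (not_lt.1 hge)).countP_le (p := p)
  omega

end NthTime

lemma OccursAtStart.nthTime_mem_Icc {γ ω : List ℕ} {t d m : ℕ} (h : OccursAtStart γ ω t d m)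
    (ht : t ≤ ω.length) {r : ℕ} (hr : r ∈ Icc 1 γ.length) :
    nthTime (inBlock d m) ω r ∈ Icc 1 ω.length := by
  rw [mem_Icc] at hr ⊢
  obtain ⟨h1, h2, -⟩ := nthTime_spec (p := inBlock d m) hr.1 (h.countP_take ▸ hr.2)
  omega

section Gaps

variable {β : Type*} [LinearOrder β] {φ : ℕ → β} {N K : ℕ} {w : β}

def InGap (φ : ℕ → β) (N K : ℕ) (w : β) : Prop :=
  (1 ≤ K → φ K < w) ∧ (K < N → w < φ (K + 1))

lemma InGap.lt_of_le (hφ : StrictMonoOn φ (Icc 1 N)) (hK : K ≤ N) (h : InGap φ N K w) {s : ℕ}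
    (hs : 1 ≤ s) (hsK : s ≤ K) : φ s < w :=
  (hφ.monotoneOn (by simp; omega) (by simp; omega) hsK).trans_lt (h.1 (hs.trans hsK))

lemma InGap.lt_of_lt (hφ : StrictMonoOn φ (Icc 1 N)) (h : InGap φ N K w) {s : ℕ}
    (hKs : K < s) (hsN : s ≤ N) : w < φ s :=
  (h.2 (hKs.trans_le hsN)).trans_le (hφ.monotoneOn (by simp; omega) (by simp; omega) hKs)

lemma InGap.ne (hφ : StrictMonoOn φ (Icc 1 N)) (hK : K ≤ N) (h : InGap φ N K w) :
    ∀ s ∈ Icc 1 N, w ≠ φ s := by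
  intro s hs
  rw [mem_Icc] at hs
  rcases le_or_gt s K with hsK | hKs
  · exact (h.lt_of_le hφ hK hs.1 hsK).ne'
  · exact (h.lt_of_lt hφ hKs hs.2).ne

lemma InGap.card_filter_lt (hφ : StrictMonoOn φ (Icc 1 N)) (hK : K ≤ N) (h : InGap φ N K w) :
    #{s ∈ Icc 1 N | φ s < w} = K := by
  have : {s ∈ Icc 1 N | φ s < w} = Icc 1 K := by
    ext s
    simp only [mem_filter, mem_Icc]
    constructor
    · rintro ⟨hs, hsw⟩
      exact ⟨hs.1, not_lt.1 fun hKs => (h.lt_of_lt hφ hKs hs.2).not_gt hsw⟩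
    · rintro ⟨hs, hsK⟩
      exact ⟨⟨hs, hsK.trans hK⟩, h.lt_of_le hφ hK hs hsK⟩
  rw [this, Nat.card_Icc, Nat.add_sub_cancel]

lemma inGap_card_filter_lt (hφ : StrictMonoOn φ (Icc 1 N)) (hw : ∀ s ∈ Icc 1 N, w ≠ φ s) :
    InGap φ N #{s ∈ Icc 1 N | φ s < w} w := by
  set r := #{s ∈ Icc 1 N | φ s < w}
  have hrN : r ≤ N := (card_filter_le _ _).trans (by simp)
  refine ⟨fun hr => ?_, fun hrN' => ?_⟩
  · by_contra hrw
    have hwr : w < φ r := lt_of_le_of_ne (not_lt.1 hrw) (hw r (by simp; omega))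
    have hsub : {s ∈ Icc 1 N | φ s < w} ⊆ Icc 1 (r - 1) := by
      intro s hs
      simp only [mem_filter, mem_Icc] at hs ⊢
      refine ⟨hs.1.1, Nat.le_sub_one_of_lt (not_le.1 fun hrs => ?_)⟩
      exact (hwr.trans_le (hφ.monotoneOn (by simp; omega) (by simp; omega) hrs)).not_gt hs.2
    have := card_le_card hsub
    simp only [Nat.card_Icc] at this
    omega
  · by_contra hwr
    have hrw : φ (r + 1) < w := lt_of_le_of_ne (not_lt.1 hwr) (hw (r + 1) (by simp; omega)).symm
    have hsub : Icc 1 (r + 1) ⊆ {s ∈ Icc 1 N | φ s < w} := by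
      intro s hs
      simp only [mem_filter, mem_Icc] at hs ⊢
      exact ⟨⟨hs.1, by omega⟩,
        (hφ.monotoneOn (by simp; omega) (by simp; omega) hs.2).trans_lt hrw⟩
    have := card_le_card hsub
    simp only [Nat.card_Icc] at this
    omega

lemma exists_inGap [DenselyOrdered β] (hφ : StrictMonoOn φ (Icc 1 N)) {lo hi : β} (hlohi : lo < hi)
    (hlo : K < N → lo < φ (K + 1)) (hhi : 1 ≤ K → φ K < hi) :
    ∃ w, lo < w ∧ w < hi ∧ InGap φ N K w := by
  have hstep : 1 ≤ K → K < N → φ K < φ (K + 1) :=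
    fun h1 h2 => hφ (by simp; omega) (by simp; omega) (Nat.lt_succ_self K)
  obtain ⟨w, hlow, hhigh⟩ : ∃ w, (if 1 ≤ K then max lo (φ K) else lo) < w ∧
      w < (if K < N then min hi (φ (K + 1)) else hi) := by
    apply _root_.exists_between
    split_ifs with h1 h2 h2 <;> simp [*]
  refine ⟨w, ?_, ?_, fun h1 => ?_, fun h2 => ?_⟩
  all_goals split_ifs at hlow hhigh <;> simp_all

end Gaps

def IsGenericConfig (n : ℕ) (x : ℕ → ℝ × ℝ) : Prop :=
  StrictMonoOn (fun i => (x i).1) (Icc 1 n) ∧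
    (∀ i ∈ Icc 1 n, ∀ j ∈ Icc 1 n, ∀ k ∈ Icc 1 n,
      i ≠ j → i ≠ k → j ≠ k → det2 (x j - x i) (x k - x i) ≠ 0) ∧
    (∀ i ∈ Icc 1 n, ∀ j ∈ Icc 1 n, ∀ k ∈ Icc 1 n, ∀ l ∈ Icc 1 n,
      i ≠ j → k ≠ l → ({i, j} : Finset ℕ) ≠ {k, l} → det2 (x j - x i) (x l - x k) ≠ 0)

def Realizes (n : ℕ) (s : List ℕ) (x : ℕ → ℝ × ℝ) (φ : ℕ → ℝ) : Prop :=
  (∀ t ∈ Icc 1 s.length, 0 < φ t ∧ φ t < Real.pi) ∧ StrictMonoOn φ (Icc 1 s.length) ∧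
    ∀ ψ, 0 < ψ → ψ < Real.pi → (∀ t ∈ Icc 1 s.length, ψ ≠ φ t) →
      StrictMonoOn (fun u => (rotPt ψ (x (prefixPerm s #{t ∈ Icc 1 s.length | φ t < ψ} u))).1)
        (Icc 1 n)

lemma geometricallyRealizable_iff {n : ℕ} {s : List ℕ} :
    GeometricallyRealizable n s ↔ ∃ x, IsGenericConfig n x ∧ ∃ φ, Realizes n s x φ :=
  ⟨fun ⟨x, h₁, h₂, h₃, φ, hφ⟩ => ⟨x, ⟨h₁, h₂, h₃⟩, φ, hφ⟩,
    fun ⟨x, ⟨h₁, h₂, h₃⟩, φ, hφ⟩ => ⟨x, h₁, h₂, h₃, φ, hφ⟩⟩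

lemma add_mem_Icc_one {u m d n : ℕ} (hu : u ∈ Icc 1 m) (hdm : d + m ≤ n) : u + d ∈ Icc 1 n := by
  simp only [mem_Icc] at hu ⊢
  omega

lemma IsGenericConfig.comp_add {n m d : ℕ} {x : ℕ → ℝ × ℝ} (hx : IsGenericConfig n x)
    (hdm : d + m ≤ n) : IsGenericConfig m (fun u => x (u + d)) := by
  have hmem : ∀ u ∈ Icc 1 m, u + d ∈ Icc 1 n := fun u hu => add_mem_Icc_one hu hdm
  refine ⟨fun i hi j hj hij => hx.1 (hmem i hi) (hmem j hj) (by omega),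
    fun i hi j hj k hk hij hik hjk => hx.2.1 _ (hmem i hi) _ (hmem j hj) _ (hmem k hk)
      (by omega) (by omega) (by omega),
    fun i hi j hj k hk l hl hij hkl hpair => hx.2.2 _ (hmem i hi) _ (hmem j hj) _ (hmem k hk) _
      (hmem l hl) (by omega) (by omega) ?_⟩
  have hshift : ∀ a b : ℕ,
      ({a + d, b + d} : Finset ℕ) = ({a, b} : Finset ℕ).map (addRightEmbedding d) :=
    fun a b => by simp
  rw [hshift, hshift]
  exact (map_inj.not).2 hpair

section Realizes

variable {n : ℕ} {ω : List ℕ} {x : ℕ → ℝ × ℝ} {φ : ℕ → ℝ}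

lemma Realizes.strictMonoOn_of_inGap (h : Realizes n ω x φ) {K : ℕ} (hK : K ≤ ω.length) {w : ℝ}
    (hw0 : 0 < w) (hwπ : w < Real.pi) (hw : InGap φ ω.length K w) :
    StrictMonoOn (fun u => (rotPt w (x (prefixPerm ω K u))).1) (Icc 1 n) := by
  simpa only [hw.card_filter_lt h.2.1 hK] using h.2.2 w hw0 hwπ (hw.ne h.2.1 hK)

variable {γ : List ℕ} {t d m : ℕ}

lemma Realizes.block_strictMonoOn_of_inGap (h : Realizes n ω x φ) (hocc : OccursAtStart γ ω t d m)
    (ht : t ≤ ω.length) (hdm : d + m ≤ n) {K : ℕ} (hK : K ≤ t) {w : ℝ} (hw0 : 0 < w)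
    (hwπ : w < Real.pi) (hw : InGap φ ω.length K w) :
    StrictMonoOn (fun u => (rotPt w (x (prefixPerm γ ((ω.take K).countP (inBlock d m)) u + d))).1)
      (Icc 1 m) := by
  intro u hu v hv huv
  have := h.strictMonoOn_of_inGap (hK.trans ht) hw0 hwπ hw (add_mem_Icc_one hu hdm)
    (add_mem_Icc_one hv hdm) (by omega)
  simpa only [hocc.prefixPerm_add_apply hK hu, hocc.prefixPerm_add_apply hK hv] using this

lemma Realizes.exists_gt_block_strictMonoOn (h : Realizes n ω x φ)
    (hocc : OccursAtStart γ ω t d m) (ht : t ≤ ω.length) (hdm : d + m ≤ n) {r : ℕ}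
    (hr : r < γ.length) {ψ : ℝ} (hψ0 : 0 < ψ) (hψ : ψ < φ (nthTime (inBlock d m) ω (r + 1))) :
    ∃ w, ψ < w ∧ w < Real.pi ∧
      StrictMonoOn (fun u => (rotPt w (x (prefixPerm γ r u + d))).1) (Icc 1 m) := by
  obtain ⟨hpos, hKt, -, hcount⟩ :=
    nthTime_spec (p := inBlock d m) (Nat.le_add_left 1 r) (hocc.countP_take ▸ hr)
  set K := nthTime (inBlock d m) ω (r + 1) - 1
  have hK : K + 1 = nthTime (inBlock d m) ω (r + 1) := Nat.sub_add_cancel hpos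
  have hφK : φ (K + 1) < Real.pi := (h.1 (K + 1) (by simp; omega)).2
  obtain ⟨w, hψw, hwπ, hw⟩ := exists_inGap (K := K) h.2.1 (hK ▸ hψ |>.trans hφK)
    (fun _ => hK ▸ hψ) (fun hK1 => (h.1 K (by simp; omega)).2)
  refine ⟨w, hψw, hwπ, ?_⟩
  simpa only [show (ω.take K).countP (inBlock d m) = r by omega] using
    h.block_strictMonoOn_of_inGap hocc ht hdm (by omega) (hψ0.trans hψw) hwπ hw

lemma Realizes.exists_lt_block_strictMonoOn (h : Realizes n ω x φ)
    (hocc : OccursAtStart γ ω t d m) (ht : t ≤ ω.length) (hdm : d + m ≤ n) {r : ℕ}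
    (hr1 : 1 ≤ r) (hr : r ≤ γ.length) {ψ : ℝ} (hψ : φ (nthTime (inBlock d m) ω r) < ψ)
    (hψπ : ψ < Real.pi) :
    ∃ w, 0 < w ∧ w < ψ ∧
      StrictMonoOn (fun u => (rotPt w (x (prefixPerm γ r u + d))).1) (Icc 1 m) := by
  obtain ⟨hK1, hKt, hcount, -⟩ := nthTime_spec (p := inBlock d m) hr1 (hocc.countP_take ▸ hr)
  obtain ⟨w, hw0, hwψ, hw⟩ := exists_inGap (K := nthTime (inBlock d m) ω r) h.2.1
    ((h.1 _ (by simp; omega)).1.trans hψ) (fun hKN => (h.1 _ (by simp; omega)).1) (fun _ => hψ)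
  refine ⟨w, hw0, hwψ, ?_⟩
  simpa only [hcount] using h.block_strictMonoOn_of_inGap hocc ht hdm hKt hw0 (hwψ.trans hψπ) hw

theorem Realizes.restrict (h : Realizes n ω x φ) (hx : StrictMonoOn (fun i => (x i).1) (Icc 1 n))
    (hocc : OccursAtStart γ ω t d m) (ht : t ≤ ω.length) (hdm : d + m ≤ n)
    (hγ : IsSortingNetwork m γ) :
    Realizes m γ (fun u => x (u + d)) (fun r => φ (nthTime (inBlock d m) ω r)) := by
  have hmono : StrictMonoOn (fun r => φ (nthTime (inBlock d m) ω r)) (Icc 1 γ.length) :=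
    fun r hr r' hr' hrr' => h.2.1 (hocc.nthTime_mem_Icc ht hr) (hocc.nthTime_mem_Icc ht hr')
      (nthTime_strictMonoOn (t := t) (hocc.countP_take ▸ hr) (hocc.countP_take ▸ hr') hrr')
  have hxd : StrictMonoOn (fun i => (x (i + d)).1) (Icc 1 m) :=
    fun i hi j hj hij => hx (add_mem_Icc_one hi hdm) (add_mem_Icc_one hj hdm) (by omega)
  refine ⟨fun r hr => h.1 _ (hocc.nthTime_mem_Icc ht hr), hmono, fun ψ hψ0 hψπ hψne => ?_⟩
  have hgap := inGap_card_filter_lt hmono hψne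
  set r := #{s ∈ Icc 1 γ.length | φ (nthTime (inBlock d m) ω s) < ψ}
  have hrL : r ≤ γ.length := (card_filter_le _ _).trans (by simp)
  intro u hu v hv huv
  have hQ := fun i (hi : i ∈ Icc 1 m) => hγ.prefixPerm_mem_Icc r hi
  rcases lt_or_gt_of_ne ((prefixPerm γ r).injective.ne huv.ne) with hlt | hgt
  · have hr : r < γ.length := lt_of_le_of_ne hrL fun hr => by
      rw [hr, hγ.prefixPerm_length_apply hu, hγ.prefixPerm_length_apply hv] at hlt
      have := mem_Icc.1 hu
      omega
    obtain ⟨w, hψw, hwπ, hw⟩ := h.exists_gt_block_strictMonoOn hocc ht hdm hr hψ0 (hgap.2 hr)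
    exact rotPt_fst_lt_of_le (hxd (hQ u hu) (hQ v hv) hlt) hψ0 hψw.le hwπ (hw hu hv huv)
  · have hr1 : 1 ≤ r := Nat.one_le_iff_ne_zero.2 fun hr => by
      simp only [hr, prefixPerm, List.take_zero, List.map_nil, List.prod_nil,
        Equiv.Perm.one_apply] at hgt
      omega
    obtain ⟨w, hw0, hwψ, hw⟩ :=
      h.exists_lt_block_strictMonoOn hocc ht hdm hr1 hrL (hgap.1 hr1) hψπ
    exact rotPt_fst_lt_of_ge (hxd (hQ v hv) (hQ u hu) hgt) hw0 hwψ.le hψπ (hw hu hv huv)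

end Realizes

theorem pattern_of_realizable_is_realizable_general (n : ℕ) (ω : List ℕ)
    (hreal : GeometricallyRealizable n ω)
    (m : ℕ) (γ : List ℕ) (hγ : IsSortingNetwork m γ)
    (t a : ℕ) (hocc : OccursAt γ n ω 1 t a (a + m - 2)) :
    GeometricallyRealizable m γ := by
  obtain ⟨x, hx, φ, hφ⟩ := geometricallyRealizable_iff.1 hreal
  have hdm : a - 1 + m ≤ n := by
    obtain ⟨-, -, -, ha, -, hbn, -⟩ := hocc
    have := hγ.1
    omega
  exact geometricallyRealizable_iff.2 ⟨_, hx.comp_add hdm, _,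
    hφ.restrict hx.1 (hocc.occursAtStart (zero_lt_two.trans_le hγ.1)) hocc.2.2.1 hdm hγ⟩

/-- If `ω` is a geometrically realizable sorting network of size `n` and the sorting network
`γ` of size `m ≥ 2`, viewed as a pattern, occurs in `ω` at time interval `[1, t]` and at
position `[a, a + m - 2]`, then `γ` is geometrically realizable. -/
theorem pattern_of_realizable_is_realizable (n : ℕ) (ω : List ℕ)
    (hω : IsSortingNetwork n ω) (hreal : GeometricallyRealizable n ω)
    (m : ℕ) (hm : 2 ≤ m) (γ : List ℕ) (hγ : IsSortingNetwork m γ)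
    (t a : ℕ) (hocc : OccursAt γ n ω 1 t a (a + m - 2)) :
    GeometricallyRealizable m γ :=
  pattern_of_realizable_is_realizable_general n ω hreal m γ hγ t a hocc
end
end
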